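/- arXiv:1206.3821 — 4 statements merged into one kernel-verified Lean document; each statement's English description precedes it below -/
import Mathlib

section
/- Let G be a locally compact topological abelian group, X a complex Banach space, and V a nonempty set of functions G → X, each recurrent, uniformly continuous and with relatively compact range, satisfying condition (3.2). Let U be a maximal element (with respect to set inclusion) among the sets U' of recurrent, uniformly continuous functions G → X with relatively compact range such that V ⊆ U' and U' satisfies (3.2). Then for every continuous homomorphism ω : G → ℂ with |ω(t)| = 1 for all t ∈ G and every g ∈ U, the function t ↦ ω(t) g(t) belongs to U. -/
open Filter Topology Pointwise

/-- A subset `E` of `G` is relatively dense if `E + L = G` for some compact `L`. -/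
def RelDenseG {G : Type*} [AddCommGroup G] [TopologicalSpace G] (E : Set G) : Prop :=
  ∃ L : Set G, IsCompact L ∧ E + L = Set.univ

/-- `E(f, ε, K)`: the set of `ε`-`K`-periods of `f`. -/
def EsetG {G X : Type*} [AddCommGroup G] [NormedAddCommGroup X]
    (f : G → X) (ε : ℝ) (K : Set G) : Set G :=
  {τ | ∀ t ∈ K, ‖f (t + τ) - f t‖ ≤ ε}

/-- A continuous `f : G → X` is recurrent if all its sets of `ε`-`K`-periods are
relatively dense. -/
def RecurrentG {G X : Type*} [AddCommGroup G] [TopologicalSpace G] [NormedAddCommGroup X]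
    (f : G → X) : Prop :=
  Continuous f ∧ ∀ ε > (0 : ℝ), ∀ K : Set G, IsCompact K → RelDenseG (EsetG f ε K)

/-- Condition (3.2): every finite tuple from `U` is recurrent as a vector-valued
function, i.e. has relatively dense sets of joint `ε`-`K`-periods. -/
def Sat32 {G X : Type*} [AddCommGroup G] [TopologicalSpace G] [NormedAddCommGroup X]
    (U : Set (G → X)) : Prop :=
  ∀ n : ℕ, ∀ f : Fin n → (G → X), (∀ i, f i ∈ U) →
    ∀ ε > (0 : ℝ), ∀ K : Set G, IsCompact K →
      RelDenseG {τ : G | ∀ t ∈ K, ∀ i, ‖f i (t + τ) - f i t‖ ≤ ε}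

/-- `f` is recurrent, uniformly continuous, with relatively compact range. -/
def RecurrentUrc {G X : Type*} [AddCommGroup G] [UniformSpace G] [NormedAddCommGroup X]
    (f : G → X) : Prop :=
  RecurrentG f ∧ UniformContinuous f ∧ IsCompact (closure (Set.range f))

section Aux

variable {G : Type*} [AddCommGroup G] [TopologicalSpace G]

lemma relDenseG_mono {E E' : Set G} (h : E ⊆ E') (hE : RelDenseG E) : RelDenseG E' := by
  obtain ⟨L, hL, hEL⟩ := hE
  refine ⟨L, hL, Set.eq_univ_of_univ_subset ?_⟩
  rw [← hEL]
  exact Set.add_subset_add_right h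

variable {X : Type*} [NormedAddCommGroup X]

lemma EsetG_anti {f : G → X} {ε ε' : ℝ} {K K' : Set G} (hε : ε ≤ ε') (hK : K' ⊆ K) :
    EsetG f ε K ⊆ EsetG f ε' K' := fun _ hτ t ht => (hτ t (hK ht)).trans hε

lemma zero_mem_EsetG {f : G → X} {ε : ℝ} (hε : 0 ≤ ε) (K : Set G) :
    (0 : G) ∈ EsetG f ε K := by
  intro t _
  simp [hε]

end Aux

section LemA

variable {G Y : Type*} [AddCommGroup G] [TopologicalSpace G] [ContinuousAdd G]
  [NormedAddCommGroup Y]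

lemma relDenseG_eset_inter_char (F : G → Y) (ω : G → ℂ)
    (hmul : ∀ s t : G, ω (s + t) = ω s * ω t) (habs : ∀ t, ‖ω t‖ = 1)
    (hP : ∀ ε > (0 : ℝ), ∀ K : Set G, IsCompact K → RelDenseG (EsetG F ε K))
    {ε δ : ℝ} (hε : 0 < ε) (hδ : 0 < δ) {K : Set G} (hK : IsCompact K) :
    RelDenseG {τ | τ ∈ EsetG F ε K ∧ ‖ω τ - 1‖ ≤ δ} := by
  classical
  -- the index type of pairs (ε', K')
  let ι := {p : ℝ × Set G // 0 < p.1 ∧ IsCompact p.2}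
  haveI : Nonempty ι := ⟨⟨(1, ∅), one_pos, isCompact_empty⟩⟩
  let Z : ι → Set ℂ := fun i => closure (ω '' EsetG F i.1.1 i.1.2)
  let C : Set ℂ := ⋂ i, Z i
  have hω0 : ω 0 = 1 := by
    have h0 := hmul 0 0
    rw [add_zero] at h0
    have hne : ω 0 ≠ 0 := by
      intro e
      have h1 := habs 0
      rw [e] at h1
      simp at h1
    have : ω 0 * 1 = ω 0 * ω 0 := by rw [mul_one]; exact h0
    exact (mul_left_cancel₀ hne this).symm
  have hZsphere : ∀ i, Z i ⊆ Metric.sphere (0 : ℂ) 1 := by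
    intro i
    refine closure_minimal ?_ Metric.isClosed_sphere
    rintro _ ⟨τ, _, rfl⟩
    simpa [mem_sphere_zero_iff_norm] using habs τ
  have hZcompact : ∀ i, IsCompact (Z i) :=
    fun i => (isCompact_sphere (0:ℂ) 1).of_isClosed_subset isClosed_closure (hZsphere i)
  have hone : ∀ i, (1 : ℂ) ∈ Z i := by
    intro i
    refine subset_closure ⟨0, zero_mem_EsetG i.2.1.le _, hω0⟩
  have hCsub : ∀ i, C ⊆ Z i := fun i => Set.iInter_subset Z i
  have hC1 : (1 : ℂ) ∈ C := Set.mem_iInter.2 hone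
  have hCsphere : C ⊆ Metric.sphere (0:ℂ) 1 :=
    (hCsub ⟨(1, ∅), one_pos, isCompact_empty⟩).trans (hZsphere _)
  have hCclosed : IsClosed C := isClosed_iInter fun i => isClosed_closure
  have hCcompact : IsCompact C :=
    (hZcompact ⟨(1, ∅), one_pos, isCompact_empty⟩).of_isClosed_subset hCclosed (hCsub _)
  -- multiplicativity of C
  have hCmul : ∀ z ∈ C, ∀ w ∈ C, z * w ∈ C := by
    intro z hz w hw
    have hznorm : ‖z‖ = 1 := mem_sphere_zero_iff_norm.1 (hCsphere hz)
    refine Set.mem_iInter.2 fun i => ?_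
    obtain ⟨⟨εi, Ki⟩, hεi, hKi⟩ := i
    rw [Metric.mem_closure_iff]
    intro r hr
    have hz2 := Set.mem_iInter.1 hz ⟨(εi/2, Ki), half_pos hεi, hKi⟩
    rw [Metric.mem_closure_iff] at hz2
    obtain ⟨_, ⟨τ₁, hτ₁, rfl⟩, hd₁⟩ := hz2 (r/2) (half_pos hr)
    have hKi1 : IsCompact (Ki ∪ (Ki + {τ₁})) := hKi.union (hKi.add isCompact_singleton)
    have hw2 := Set.mem_iInter.1 hw ⟨(εi/2, Ki ∪ (Ki + {τ₁})), half_pos hεi, hKi1⟩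
    rw [Metric.mem_closure_iff] at hw2
    obtain ⟨_, ⟨τ₂, hτ₂, rfl⟩, hd₂⟩ := hw2 (r/2) (half_pos hr)
    refine ⟨ω (τ₁ + τ₂), ⟨τ₁ + τ₂, ?_, rfl⟩, ?_⟩
    · intro s hs
      have e1 : s + (τ₁ + τ₂) = (s + τ₁) + τ₂ := by abel
      rw [e1]
      have h1 : ‖F (s + τ₁ + τ₂) - F (s + τ₁)‖ ≤ εi/2 :=
        hτ₂ (s + τ₁) (Or.inr (Set.add_mem_add hs rfl))
      have h2 : ‖F (s + τ₁) - F s‖ ≤ εi/2 := hτ₁ s hs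
      calc ‖F (s + τ₁ + τ₂) - F s‖
          = ‖(F (s + τ₁ + τ₂) - F (s + τ₁)) + (F (s + τ₁) - F s)‖ := by
            rw [sub_add_sub_cancel]
        _ ≤ ‖F (s + τ₁ + τ₂) - F (s + τ₁)‖ + ‖F (s + τ₁) - F s‖ := norm_add_le _ _
        _ ≤ εi/2 + εi/2 := add_le_add h1 h2
        _ = εi := by ring
    · rw [hmul]
      have hωτ₂ : ‖ω τ₂‖ = 1 := habs τ₂
      have hid : z * w - ω τ₁ * ω τ₂ = z * (w - ω τ₂) + (z - ω τ₁) * ω τ₂ := by ring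
      rw [dist_eq_norm, hid]
      calc ‖z * (w - ω τ₂) + (z - ω τ₁) * ω τ₂‖
          ≤ ‖z * (w - ω τ₂)‖ + ‖(z - ω τ₁) * ω τ₂‖ := norm_add_le _ _
        _ = ‖z‖ * ‖w - ω τ₂‖ + ‖z - ω τ₁‖ * ‖ω τ₂‖ := by rw [norm_mul, norm_mul]
        _ = ‖w - ω τ₂‖ + ‖z - ω τ₁‖ := by rw [hznorm, hωτ₂]; ring
        _ < r/2 + r/2 := by
            rw [dist_eq_norm] at hd₁ hd₂
            exact add_lt_add hd₂ hd₁
        _ = r := by ring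
  -- inverses in C
  have hCinv : ∀ z ∈ C, z⁻¹ ∈ C := by
    intro z hz
    have hzne : z ≠ 0 := by
      have := mem_sphere_zero_iff_norm.1 (hCsphere hz)
      intro e; rw [e] at this; simp at this
    have hpow : ∀ n : ℕ, z ^ n ∈ C := by
      intro n
      induction n with
      | zero => simpa using hC1
      | succ m ih => rw [pow_succ]; exact hCmul _ ih _ hz
    obtain ⟨a, haC, φ, hφ, hconv⟩ := hCcompact.tendsto_subseq hpow
    have hane : a ≠ 0 := by
      have := mem_sphere_zero_iff_norm.1 (hCsphere haC)
      intro e; rw [e] at this; simp at this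
    have h1 : Tendsto (fun k => z ^ φ (k + 1)) atTop (𝓝 a) :=
      hconv.comp (tendsto_add_atTop_nat 1)
    have h2 : Tendsto (fun k => (z ^ φ k * z)⁻¹) atTop (𝓝 ((a * z)⁻¹)) := by
      have := (hconv.mul (tendsto_const_nhds (x := z)))
      exact this.inv₀ (mul_ne_zero hane hzne)
    have h3 : Tendsto (fun k => z ^ φ (k + 1) * (z ^ φ k * z)⁻¹)
        atTop (𝓝 (a * (a * z)⁻¹)) := h1.mul h2
    have key : ∀ k, z ^ (φ (k + 1) - φ k - 1) * (z ^ φ k * z) = z ^ φ (k + 1) := by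
      intro k
      rw [← pow_succ, ← pow_add]
      congr 1
      have := hφ (show k < k + 1 by omega)
      omega
    have heq : ∀ k, z ^ φ (k + 1) * (z ^ φ k * z)⁻¹ = z ^ (φ (k + 1) - φ k - 1) := by
      intro k
      rw [eq_comm, eq_mul_inv_iff_mul_eq₀ (mul_ne_zero (pow_ne_zero _ hzne) hzne)]
      exact key k
    have h3' : Tendsto (fun k => z ^ (φ (k + 1) - φ k - 1)) atTop (𝓝 (a * (a * z)⁻¹)) :=
      h3.congr heq
    have hval : a * (a * z)⁻¹ = z⁻¹ := by
      rw [mul_inv, ← mul_assoc, mul_inv_cancel₀ hane, one_mul]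
    rw [hval] at h3'
    exact hCclosed.mem_of_tendsto h3' (Eventually.of_forall fun k => hpow _)
  -- open neighbourhood of C
  set N : Set ℂ := ⋃ c ∈ C, Metric.ball c (δ/4) with hNdef
  have hNopen : IsOpen N := isOpen_biUnion fun c _ => Metric.isOpen_ball
  have hCN : C ⊆ N := fun c hc =>
    Set.mem_biUnion hc (Metric.mem_ball_self (by positivity))
  -- squeeze: some Z i is inside N
  have hsq : ∃ i : ι, Z i ⊆ N := by
    by_contra hcon
    push_neg at hcon
    have hne : ∀ i, (Z i \ N).Nonempty := by
      intro i
      obtain ⟨x, hx1, hx2⟩ := Set.not_subset.1 (hcon i)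
      exact ⟨x, hx1, hx2⟩
    have hdir : Directed (fun x1 x2 => x1 ⊇ x2) (fun i => Z i \ N) := by
      intro i j
      refine ⟨⟨(min i.1.1 j.1.1, i.1.2 ∪ j.1.2),
        lt_min i.2.1 j.2.1, i.2.2.union j.2.2⟩, ?_, ?_⟩
      · exact Set.diff_subset_diff_left
          (closure_mono (Set.image_mono (EsetG_anti (min_le_left _ _) Set.subset_union_left)))
      · exact Set.diff_subset_diff_left
          (closure_mono (Set.image_mono (EsetG_anti (min_le_right _ _) Set.subset_union_right)))
    have hint := IsCompact.nonempty_iInter_of_directed_nonempty_isCompact_isClosed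
      (fun i => Z i \ N) hdir hne
      (fun i => (hZcompact i).diff hNopen)
      (fun i => (isClosed_closure).sdiff hNopen)
    obtain ⟨x, hx⟩ := hint
    have hxC : x ∈ C := Set.mem_iInter.2 fun i => ((Set.mem_iInter.1 hx) i).1
    exact ((Set.mem_iInter.1 hx) ⟨(1, ∅), one_pos, isCompact_empty⟩).2 (hCN hxC)
  obtain ⟨⟨⟨ε₁, K₁⟩, hε₁, hK₁⟩, hZN⟩ := hsq
  -- finite net of C
  obtain ⟨net, hnetC, hnetfin, hnetcover⟩ :=
    hCcompact.finite_cover_balls (show (0:ℝ) < δ/4 by positivity)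
  -- pick almost-inverse periods
  have hpick : ∀ c ∈ net, ∃ ρ, ρ ∈ EsetG F (ε/2) K ∧ dist c⁻¹ (ω ρ) < δ/4 := by
    intro c hc
    have h1 : c⁻¹ ∈ C := hCinv c (hnetC hc)
    have h2 := Set.mem_iInter.1 h1 ⟨(ε/2, K), half_pos hε, hK⟩
    rw [Metric.mem_closure_iff] at h2
    obtain ⟨_, ⟨ρ, hρ, rfl⟩, hd⟩ := h2 (δ/4) (by positivity)
    exact ⟨ρ, hρ, hd⟩
  choose! ρ hρE hρd using hpick
  -- the big compact set and the fine period set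
  set K₂ : Set G := (K₁ ∪ K) ∪ ⋃ c ∈ net, (K + {ρ c}) with hK₂def
  have hK₂ : IsCompact K₂ :=
    (hK₁.union hK).union (hnetfin.isCompact_biUnion fun c _ => hK.add isCompact_singleton)
  have hε₂ : 0 < min ε₁ (ε/2) := lt_min hε₁ (half_pos hε)
  obtain ⟨L, hL, hEL⟩ := hP (min ε₁ (ε/2)) hε₂ K₂ hK₂
  refine ⟨(fun c => -ρ c) '' net + L, ((hnetfin.image _).isCompact.add hL),
    Set.eq_univ_of_univ_subset ?_⟩
  intro x _
  have hx : x ∈ EsetG F (min ε₁ (ε/2)) K₂ + L := by rw [hEL]; exact Set.mem_univ x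
  obtain ⟨τ, hτ, l, hl, rfl⟩ := hx
  -- locate ω τ near the net
  have hτ1 : τ ∈ EsetG F ε₁ K₁ :=
    EsetG_anti (min_le_left _ _) ((Set.subset_union_left).trans Set.subset_union_left) hτ
  have hωτN : ω τ ∈ N := hZN (subset_closure ⟨τ, hτ1, rfl⟩)
  obtain ⟨c₀, hc₀C, hc₀b⟩ := Set.mem_iUnion₂.1 hωτN
  obtain ⟨c, hcnet, hcb⟩ := Set.mem_iUnion₂.1 (hnetcover hc₀C)
  have hcC : c ∈ C := hnetC hcnet
  have hcnorm : ‖c‖ = 1 := mem_sphere_zero_iff_norm.1 (hCsphere hcC)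
  have hcne : c ≠ 0 := by intro e; rw [e] at hcnorm; simp at hcnorm
  have hdist : ‖ω τ - c‖ < δ/2 := by
    have d1 : dist (ω τ) c₀ < δ/4 := Metric.mem_ball.1 hc₀b
    have d2 : dist c₀ c < δ/4 := Metric.mem_ball.1 hcb
    calc ‖ω τ - c‖ = dist (ω τ) c := (dist_eq_norm _ _).symm
      _ ≤ dist (ω τ) c₀ + dist c₀ c := dist_triangle _ _ _
      _ < δ/4 + δ/4 := add_lt_add d1 d2
      _ = δ/2 := by ring
  -- the period σ = τ + ρ c
  have hσD : τ + ρ c ∈ {τ | τ ∈ EsetG F ε K ∧ ‖ω τ - 1‖ ≤ δ} := by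
    constructor
    · intro s hs
      have e1 : s + (τ + ρ c) = (s + ρ c) + τ := by abel
      rw [e1]
      have hmem : s + ρ c ∈ K₂ := by
        refine Or.inr (Set.mem_biUnion hcnet ?_)
        exact Set.add_mem_add hs rfl
      have h1 : ‖F (s + ρ c + τ) - F (s + ρ c)‖ ≤ min ε₁ (ε/2) := hτ _ hmem
      have h2 : ‖F (s + ρ c) - F s‖ ≤ ε/2 := hρE c hcnet s hs
      calc ‖F (s + ρ c + τ) - F s‖
          = ‖(F (s + ρ c + τ) - F (s + ρ c)) + (F (s + ρ c) - F s)‖ := by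
            rw [sub_add_sub_cancel]
        _ ≤ ‖F (s + ρ c + τ) - F (s + ρ c)‖ + ‖F (s + ρ c) - F s‖ := norm_add_le _ _
        _ ≤ min ε₁ (ε/2) + ε/2 := add_le_add h1 h2
        _ ≤ ε/2 + ε/2 := by gcongr; exact min_le_right _ _
        _ = ε := by ring
    · have hρnd : ‖ω (ρ c) - c⁻¹‖ < δ/4 := by
        have := hρd c hcnet
        rw [dist_comm, dist_eq_norm] at this
        exact this
      have hωτn : ‖ω τ‖ = 1 := habs τ
      have hcinvn : ‖c⁻¹‖ = 1 := by rw [norm_inv, hcnorm]; norm_num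
      have hid : ω τ * ω (ρ c) - 1 = ω τ * (ω (ρ c) - c⁻¹) + (ω τ - c) * c⁻¹ := by
        have hcc : c * c⁻¹ = 1 := mul_inv_cancel₀ hcne
        linear_combination hcc
      rw [hmul, hid]
      calc ‖ω τ * (ω (ρ c) - c⁻¹) + (ω τ - c) * c⁻¹‖
          ≤ ‖ω τ * (ω (ρ c) - c⁻¹)‖ + ‖(ω τ - c) * c⁻¹‖ := norm_add_le _ _
        _ = ‖ω τ‖ * ‖ω (ρ c) - c⁻¹‖ + ‖ω τ - c‖ * ‖c⁻¹‖ := by rw [norm_mul, norm_mul]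
        _ = ‖ω (ρ c) - c⁻¹‖ + ‖ω τ - c‖ := by rw [hωτn, hcinvn]; ring
        _ ≤ δ/4 + δ/2 := add_le_add hρnd.le hdist.le
        _ ≤ δ := by linarith
  refine Set.mem_add.2 ⟨τ + ρ c, hσD, -ρ c + l, ?_, by abel⟩
  exact Set.add_mem_add (Set.mem_image_of_mem _ hcnet) hl

end LemA

section LemB

variable {G X : Type*} [AddCommGroup G] [TopologicalSpace G] [ContinuousAdd G]
  [NormedAddCommGroup X] [NormedSpace ℂ X]

lemma sat32_insert_char (U : Set (G → X)) (hU32 : Sat32 U) (ω : G → ℂ)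
    (hmul : ∀ s t : G, ω (s + t) = ω s * ω t) (habs : ∀ t, ‖ω t‖ = 1)
    (g : G → X) (hg : g ∈ U) (M : ℝ) (hM : ∀ t, ‖g t‖ ≤ M) :
    Sat32 (insert (fun t => ω t • g t) U) := by
  classical
  intro n f hf ε hε K hK
  have hM0 : 0 ≤ M := le_trans (norm_nonneg _) (hM 0)
  set h : G → X := fun t => ω t • g t with hhdef
  set f' : Fin (n + 1) → (G → X) :=
    Fin.snoc (fun i => if f i ∈ U then f i else g) g with hf'def
  have hf' : ∀ j, f' j ∈ U := by
    intro j
    induction j using Fin.lastCases with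
    | last => rw [hf'def, Fin.snoc_last]; exact hg
    | cast i =>
        rw [hf'def, Fin.snoc_castSucc]
        split_ifs with hi
        · exact hi
        · exact hg
  set Φ : G → (Fin (n + 1) → X) := fun s i => f' i s with hΦdef
  have hΦ : ∀ ε' > (0:ℝ), ∀ K' : Set G, IsCompact K' → RelDenseG (EsetG Φ ε' K') := by
    intro ε' hε' K' hK'
    refine relDenseG_mono ?_ (hU32 (n+1) f' hf' ε' hε' K' hK')
    intro τ hτ t ht
    rw [show Φ (t + τ) - Φ t = fun i => f' i (t + τ) - f' i t from rfl,
      pi_norm_le_iff_of_nonneg hε'.le]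
    exact fun i => hτ t ht i
  set δ : ℝ := ε / (2 * (M + 1)) with hδdef
  have hδ : 0 < δ := by positivity
  have key := relDenseG_eset_inter_char Φ ω hmul habs hΦ (half_pos hε) hδ hK
  refine relDenseG_mono ?_ key
  rintro τ ⟨hτ1, hτ2⟩ t ht i
  have hcomp : ∀ j : Fin (n + 1), ‖f' j (t + τ) - f' j t‖ ≤ ε / 2 := by
    have h1 := hτ1 t ht
    rw [show Φ (t + τ) - Φ t = fun j => f' j (t + τ) - f' j t from rfl,
      pi_norm_le_iff_of_nonneg (half_pos hε).le] at h1
    exact h1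
  rcases hf i with hih | hiU
  · -- f i = h
    have hglast : f' (Fin.last n) = g := by rw [hf'def, Fin.snoc_last]
    have hgbd : ‖g (t + τ) - g t‖ ≤ ε / 2 := by
      have := hcomp (Fin.last n); rwa [hglast] at this
    rw [hih]
    have hid : h (t + τ) - h t
        = ω (t + τ) • (g (t + τ) - g t) + (ω (t + τ) - ω t) • g t := by
      rw [smul_sub, sub_smul]; abel
    have hωd : ‖ω (t + τ) - ω t‖ ≤ δ := by
      have e1 : ω (t + τ) - ω t = ω t * (ω τ - 1) := by
        rw [hmul]; ring
      rw [e1, norm_mul, habs t, one_mul]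
      exact hτ2
    calc ‖h (t + τ) - h t‖
        = ‖ω (t + τ) • (g (t + τ) - g t) + (ω (t + τ) - ω t) • g t‖ := by rw [hid]
      _ ≤ ‖ω (t + τ) • (g (t + τ) - g t)‖ + ‖(ω (t + τ) - ω t) • g t‖ := norm_add_le _ _
      _ = ‖ω (t + τ)‖ * ‖g (t + τ) - g t‖ + ‖ω (t + τ) - ω t‖ * ‖g t‖ := by
          rw [norm_smul, norm_smul]
      _ ≤ 1 * (ε / 2) + δ * M := by
          refine add_le_add ?_ ?_
          · rw [habs]; simpa using hgbd
          · exact mul_le_mul hωd (hM t) (norm_nonneg _) hδ.le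
      _ ≤ ε := by
          rw [hδdef]
          rw [one_mul]
          have hMle : ε / (2 * (M + 1)) * M ≤ ε / 2 := by
            rw [div_mul_eq_mul_div, div_le_div_iff₀ (by positivity) (by norm_num)]
            nlinarith
          linarith
  · -- f i ∈ U
    have hcast : f' i.castSucc = f i := by
      rw [hf'def, Fin.snoc_castSucc, if_pos hiU]
    have := hcomp i.castSucc
    rw [hcast] at this
    linarith
end LemB

/-- A maximal element `U` of the collection of sets of recurrent uniformly continuous
functions with relatively compact range that contain `V` and satisfy (3.2) is closed
under multiplication by bounded continuous characters `ω : G → ℂ`. -/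
theorem maximal_recUrc_class_character_invariant {G X : Type*} [AddCommGroup G]
    [UniformSpace G] [IsUniformAddGroup G] [LocallyCompactSpace G]
    [NormedAddCommGroup X] [NormedSpace ℂ X] [CompleteSpace X]
    (V : Set (G → X)) (hV : V.Nonempty) (hVrec : ∀ f ∈ V, RecurrentUrc f) (hV32 : Sat32 V)
    (U : Set (G → X))
    (hU : (∀ f ∈ U, RecurrentUrc f) ∧ V ⊆ U ∧ Sat32 U)
    (hUmax : ∀ U' : Set (G → X), ((∀ f ∈ U', RecurrentUrc f) ∧ V ⊆ U' ∧ Sat32 U') →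
      U ⊆ U' → U' = U) :
    ∀ ω : G → ℂ, Continuous ω → (∀ s t : G, ω (s + t) = ω s * ω t) →
      (∀ t : G, ‖ω t‖ = 1) →
      ∀ g ∈ U, (fun t => ω t • g t) ∈ U := by
  intro ω hωcont hmul habs0 g hg
  obtain ⟨hUrec, hVU, hU32⟩ := hU
  have habs : ∀ t, ‖ω t‖ = 1 := fun t => habs0 t
  set h : G → X := fun t => ω t • g t with hhdef
  have hgUrc := hUrec g hg
  obtain ⟨hgrec, hgUC, hgcpt⟩ := hgUrc
  -- the bound on g
  obtain ⟨M, hM⟩ : ∃ M : ℝ, ∀ t, ‖g t‖ ≤ M := by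
    obtain ⟨C, hC⟩ := isBounded_iff_forall_norm_le.1 hgcpt.isBounded
    exact ⟨C, fun t => hC _ (subset_closure (Set.mem_range_self t))⟩
  have hM0 : 0 ≤ M := le_trans (norm_nonneg _) (hM 0)
  -- ω 0 = 1
  have hω0 : ω 0 = 1 := by
    have h0 := hmul 0 0
    rw [add_zero] at h0
    have hne : ω 0 ≠ 0 := by
      intro e
      have h1 := habs 0
      rw [e] at h1
      simp at h1
    have : ω 0 * 1 = ω 0 * ω 0 := by rw [mul_one]; exact h0
    exact (mul_left_cancel₀ hne this).symm
  -- Sat32 of the enlarged class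
  have h32 : Sat32 (insert h U) := sat32_insert_char U hU32 ω hmul habs g hg M hM
  -- recurrence of h
  have hhrec : RecurrentG h := by
    constructor
    · exact hωcont.smul hgrec.1
    · intro ε hε K hK
      have hinst := h32 1 (fun _ => h) (fun _ => Set.mem_insert _ _) ε hε K hK
      refine relDenseG_mono ?_ hinst
      intro τ hτ t ht
      exact hτ t ht 0
  -- uniform continuity of ω
  have hωUC : UniformContinuous ω := by
    rw [uniformContinuous_def]
    intro r hr
    obtain ⟨ε', hε', hball⟩ := Metric.mem_uniformity_dist.1 hr
    have hnb : ω ⁻¹' Metric.ball 1 ε' ∈ 𝓝 (0 : G) := by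
      refine hωcont.continuousAt ?_
      rw [hω0]
      exact Metric.isOpen_ball.mem_nhds (Metric.mem_ball_self hε')
    rw [uniformity_eq_comap_nhds_zero G]
    refine Filter.mem_comap.2 ⟨_, hnb, ?_⟩
    intro x hx
    refine hball ?_
    have e1 : ω x.2 = ω x.1 * ω (x.2 - x.1) := by
      rw [← hmul]
      congr 1
      abel
    have hx' : dist (ω (x.2 - x.1)) 1 < ε' := Metric.mem_ball.1 hx
    calc dist (ω x.1) (ω x.2) = ‖ω x.1 - ω x.2‖ := dist_eq_norm _ _
      _ = ‖ω x.1 * (1 - ω (x.2 - x.1))‖ := by rw [e1]; ring_nf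
      _ = ‖ω x.1‖ * ‖1 - ω (x.2 - x.1)‖ := norm_mul _ _
      _ = ‖ω (x.2 - x.1) - 1‖ := by rw [habs, one_mul, norm_sub_rev]
      _ = dist (ω (x.2 - x.1)) 1 := (dist_eq_norm _ _).symm
      _ < ε' := hx'
  -- uniform continuity of h
  have hhUC : UniformContinuous h := by
    rw [uniformContinuous_def]
    intro r hr
    obtain ⟨ε', hε', hball⟩ := Metric.mem_uniformity_dist.1 hr
    have hA : {x : G × G | dist (g x.1) (g x.2) < ε' / 2} ∈ uniformity G :=
      uniformContinuous_def.1 hgUC _ (Metric.dist_mem_uniformity (by positivity))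
    have hB : {x : G × G | dist (ω x.1) (ω x.2) < ε' / (2 * (M + 1))} ∈ uniformity G :=
      uniformContinuous_def.1 hωUC _ (Metric.dist_mem_uniformity (by positivity))
    filter_upwards [hA, hB] with x h1 h2
    refine hball ?_
    have hid : h x.1 - h x.2 = ω x.1 • (g x.1 - g x.2) + (ω x.1 - ω x.2) • g x.2 := by
      rw [hhdef]
      dsimp only
      rw [smul_sub, sub_smul]
      abel
    rw [dist_eq_norm] at h1 h2 ⊢
    calc ‖h x.1 - h x.2‖
        = ‖ω x.1 • (g x.1 - g x.2) + (ω x.1 - ω x.2) • g x.2‖ := by rw [hid]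
      _ ≤ ‖ω x.1 • (g x.1 - g x.2)‖ + ‖(ω x.1 - ω x.2) • g x.2‖ := norm_add_le _ _
      _ = ‖ω x.1‖ * ‖g x.1 - g x.2‖ + ‖ω x.1 - ω x.2‖ * ‖g x.2‖ := by
          rw [norm_smul, norm_smul]
      _ < ε' := by
          rw [habs, one_mul]
          have hb1 : ‖ω x.1 - ω x.2‖ * ‖g x.2‖ ≤ ‖ω x.1 - ω x.2‖ * (M + 1) := by
            refine mul_le_mul_of_nonneg_left ?_ (norm_nonneg _)
            have := hM x.2
            linarith
          have hb2 : ‖ω x.1 - ω x.2‖ * (M + 1) < ε' / 2 := by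
            calc ‖ω x.1 - ω x.2‖ * (M + 1) < ε' / (2 * (M + 1)) * (M + 1) :=
                  mul_lt_mul_of_pos_right h2 (by positivity)
              _ = ε' / 2 := by field_simp
          linarith
  -- relatively compact range of h
  have hhcpt : IsCompact (closure (Set.range h)) := by
    have hT : IsCompact ((fun p : ℂ × X => p.1 • p.2) ''
        (Metric.sphere (0:ℂ) 1 ×ˢ closure (Set.range g))) :=
      ((isCompact_sphere (0:ℂ) 1).prod hgcpt).image continuous_smul
    refine hT.of_isClosed_subset isClosed_closure (closure_minimal ?_ hT.isClosed)
    rintro _ ⟨t, rfl⟩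
    exact ⟨(ω t, g t), ⟨mem_sphere_zero_iff_norm.2 (habs t),
      subset_closure (Set.mem_range_self t)⟩, rfl⟩
  -- assemble and use maximality
  have hinsert : (∀ f ∈ insert h U, RecurrentUrc f) ∧ V ⊆ insert h U ∧ Sat32 (insert h U) := by
    refine ⟨?_, hVU.trans (Set.subset_insert _ _), h32⟩
    intro f hf
    rcases hf with hfh | hfU
    · rw [hfh]; exact ⟨hhrec, hhUC, hhcpt⟩
    · exact hUrec f hfU
  have heq := hUmax _ hinsert (Set.subset_insert _ _)
  rw [← heq]
  exact Set.mem_insert _ _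
end

section
/- Let X be a Banach space and f : ℝ → X continuous. Assume that for every h > 0 the difference Δ_h f is recurrent, uniformly continuous, and has relatively compact range. Then f is uniformly continuous, and for every k > 0 the function f − M_k f is recurrent, uniformly continuous, and has relatively compact range. -/
open Filter Topology

/-- `E(f, ε, K)`: the set of `ε`-`K`-periods of `f`. -/
def Eset {X : Type*} [NormedAddCommGroup X] (f : ℝ → X) (ε : ℝ) (K : Set ℝ) : Set ℝ :=
  {τ | ∀ t ∈ K, ‖f (t + τ) - f t‖ ≤ ε}

/-- A set `E ⊆ ℝ` is relatively dense if for some `L ≥ 0` it meets every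
interval `[a, a + L]`. -/
def RelDense (E : Set ℝ) : Prop :=
  ∃ L ≥ (0 : ℝ), ∀ a : ℝ, (E ∩ Set.Icc a (a + L)).Nonempty

/-- A continuous `f : ℝ → X` is recurrent if all its sets of `ε`-`K`-periods are
relatively dense. -/
def Recurrent {X : Type*} [NormedAddCommGroup X] (f : ℝ → X) : Prop :=
  Continuous f ∧ ∀ ε > (0 : ℝ), ∀ K : Set ℝ, IsCompact K → RelDense (Eset f ε K)

open MeasureTheory Set intervalIntegral

set_option linter.unusedVariables false
set_option linter.unusedSectionVars false
set_option linter.unnecessarySimpa false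

lemma bdd_of_cpt {X : Type*} [NormedAddCommGroup X] {g : ℝ → X}
    (h : IsCompact (closure (Set.range g))) : ∃ M : ℝ, 0 ≤ M ∧ ∀ t, ‖g t‖ ≤ M := by
  obtain ⟨M, hM⟩ := h.isBounded.exists_norm_le
  exact ⟨max M 0, le_max_right _ _, fun t => le_trans (hM _ (subset_closure (Set.mem_range_self t))) (le_max_left _ _)⟩

-- Baire step
lemma baire_step {X : Type*} [NormedAddCommGroup X] (f : ℝ → X) (hf : Continuous f)
    (hbd : ∀ h : ℝ, ∃ M, ∀ t : ℝ, ‖f (t + h) - f t‖ ≤ M) :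
    ∃ c > (0:ℝ), ∃ M : ℝ, 0 ≤ M ∧ ∀ ρ : ℝ, |ρ| ≤ c → ∀ t, ‖f (t + ρ) - f t‖ ≤ M := by
  set A : ℕ → Set ℝ := fun n => {h : ℝ | ∀ t, ‖f (t + h) - f t‖ ≤ n} with hA
  have hclosed : ∀ n, IsClosed (A n) := by
    intro n
    have : A n = ⋂ t : ℝ, {h : ℝ | ‖f (t + h) - f t‖ ≤ n} := by
      ext h; simp [hA, Set.mem_iInter]
    rw [this]
    exact isClosed_iInter fun t => isClosed_le (by continuity) continuous_const
  have hunion : (⋃ n, A n) = Set.univ := by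
    ext h; simp only [Set.mem_iUnion, Set.mem_univ, iff_true]
    obtain ⟨M, hM⟩ := hbd h
    obtain ⟨n, hn⟩ := exists_nat_ge M
    exact ⟨n, fun t => (hM t).trans hn⟩
  obtain ⟨n, hn⟩ := nonempty_interior_of_iUnion_of_closed hclosed hunion
  obtain ⟨h₀, hh₀⟩ := hn
  obtain ⟨ε, hε, hball⟩ := Metric.isOpen_iff.1 isOpen_interior h₀ hh₀
  refine ⟨ε/2, by linarith, 2*n, by positivity, fun ρ hρ t => ?_⟩
  have h1 : h₀ + ρ ∈ A n := interior_subset (hball (by simp [Real.dist_eq]; linarith [abs_nonneg ρ]))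
  have h2 : h₀ ∈ A n := interior_subset hh₀
  have e1 := h1 (t - h₀)
  have e2 := h2 (t - h₀)
  have e1' : ‖f (t + ρ) - f (t - h₀)‖ ≤ (n:ℝ) := by
    rwa [show t - h₀ + (h₀ + ρ) = t + ρ by ring] at e1
  have e2' : ‖f t - f (t - h₀)‖ ≤ (n:ℝ) := by
    rwa [show t - h₀ + h₀ = t by ring] at e2
  have hid : f (t + ρ) - f t = (f (t + ρ) - f (t - h₀)) - (f t - f (t - h₀)) := by abel
  rw [hid]
  calc ‖_ - _‖ ≤ _ := norm_sub_le _ _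
  _ ≤ (n:ℝ) + n := add_le_add e1' e2'
  _ = 2*n := by ring

lemma step_bound {X : Type*} [NormedAddCommGroup X] (f : ℝ → X) {c M : ℝ} (hc : 0 < c)
    (hM : 0 ≤ M) (hsmall : ∀ ρ : ℝ, |ρ| ≤ c → ∀ t, ‖f (t + ρ) - f t‖ ≤ M) :
    ∀ j : ℕ, ∀ s : ℝ, 0 ≤ s → s ≤ j * c → ∀ t, ‖f (t + s) - f t‖ ≤ j * M := by
  intro j
  induction j with
  | zero => intro s h0 h1 t
            have : s = 0 := le_antisymm (by simpa using h1) h0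
            simp [this]
  | succ j ih =>
    intro s h0 h1 t
    by_cases hs : s ≤ c
    · have e := hsmall s (by rwa [abs_of_nonneg h0]) t
      have : (0:ℝ) ≤ (j:ℝ) * M := by positivity
      calc ‖f (t + s) - f t‖ ≤ M := e
      _ ≤ ((j:ℕ)+1 : ℕ) * M := by push_cast; nlinarith
    · push_neg at hs
      have h0' : 0 ≤ s - c := by linarith
      have h1' : s - c ≤ j * c := by push_cast at h1 ⊢; linarith
      have e1 := ih (s - c) h0' h1' (t + c)
      have e2 := hsmall c (by rw [abs_of_nonneg hc.le]) t
      have hid : f (t + s) - f t = (f ((t + c) + (s - c)) - f (t + c)) + (f (t + c) - f t) := by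
        rw [show t + c + (s - c) = t + s by ring]; abel
      rw [hid]
      calc ‖_ + _‖ ≤ _ := norm_add_le _ _
      _ ≤ (j:ℝ) * M + M := add_le_add e1 e2
      _ = ((j:ℕ)+1 : ℕ) * M := by push_cast; ring

lemma bound_on_Icc {X : Type*} [NormedAddCommGroup X] (f : ℝ → X) (hf : Continuous f)
    (hbd : ∀ h : ℝ, ∃ M, ∀ t : ℝ, ‖f (t + h) - f t‖ ≤ M) (b : ℝ) :
    ∃ M1 : ℝ, 0 ≤ M1 ∧ ∀ s ∈ Set.Icc (0:ℝ) b, ∀ t, ‖f (t + s) - f t‖ ≤ M1 := by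
  obtain ⟨c, hc, M, hM0, hsmall⟩ := baire_step f hf hbd
  obtain ⟨m, hm⟩ := exists_nat_ge (b / c)
  refine ⟨m * M, by positivity, fun s hs t => ?_⟩
  have : s ≤ m * c := by
    have : b ≤ m * c := by
      rw [div_le_iff₀ hc] at hm; linarith
    linarith [hs.2]
  exact step_bound f hc hM0 hsmall m s hs.1 this t

section
variable {X : Type*} [NormedAddCommGroup X] [NormedSpace ℝ X] [CompleteSpace X]

lemma uc_of_delta (f : ℝ → X) (hf : Continuous f)
    (hbd : ∀ h : ℝ, ∃ M, ∀ t : ℝ, ‖f (t + h) - f t‖ ≤ M)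
    (hM1 : ∃ M1 : ℝ, 0 ≤ M1 ∧ ∀ s ∈ Set.Icc (0:ℝ) 1, ∀ t, ‖f (t + s) - f t‖ ≤ M1)
    (hUC : ∀ h > (0:ℝ), UniformContinuous fun t => f (t + h) - f t) :
    UniformContinuous f := by
  obtain ⟨M1, hM1nn, hM1⟩ := hM1
  obtain ⟨K1, hK1⟩ := hbd 1
  have hK1nn : 0 ≤ K1 := le_trans (norm_nonneg _) (hK1 0)
  set C : ℝ := 2 * M1 + 1 with hC
  have hCpos : 0 < C := by positivity
  set D : ℝ → ℝ → ℝ := fun δ s =>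
    ⨆ q : ℚ, min ‖f ((q:ℝ) + δ + s) - f ((q:ℝ) + δ) - (f ((q:ℝ) + s) - f (q:ℝ))‖ C with hD
  have hbdd : ∀ δ s, BddAbove (Set.range fun q : ℚ =>
      min ‖f ((q:ℝ) + δ + s) - f ((q:ℝ) + δ) - (f ((q:ℝ) + s) - f (q:ℝ))‖ C) := by
    intro δ s
    exact ⟨C, by rintro x ⟨q, rfl⟩; exact min_le_right _ _⟩
  have hDleC : ∀ δ s, D δ s ≤ C := fun δ s =>
    ciSup_le fun q => min_le_right _ _
  have hDnn : ∀ δ s, 0 ≤ D δ s := by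
    intro δ s
    exact le_trans (le_min (norm_nonneg _) hCpos.le) (le_ciSup (hbdd δ s) (0:ℚ))
  have realbound : ∀ δ : ℝ, ∀ s ∈ Set.Icc (0:ℝ) 1, ∀ t : ℝ,
      ‖f (t + δ + s) - f (t + δ) - (f (t + s) - f t)‖ ≤ D δ s := by
    intro δ s hs t
    set g : ℝ → ℝ := fun u => min ‖f (u + δ + s) - f (u + δ) - (f (u + s) - f u)‖ C with hg
    have hgc : Continuous g := by
      apply Continuous.min _ continuous_const
      exact (((hf.comp ((continuous_id.add continuous_const).add continuous_const)).sub
        (hf.comp (continuous_id.add continuous_const))).sub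
        ((hf.comp (continuous_id.add continuous_const)).sub hf)).norm
    have hsub : Set.range ((↑) : ℚ → ℝ) ⊆ {u : ℝ | g u ≤ D δ s} := by
      rintro _ ⟨q, rfl⟩
      exact le_ciSup (hbdd δ s) q
    have hclosed : IsClosed {u : ℝ | g u ≤ D δ s} := isClosed_le hgc continuous_const
    have hall : ∀ u : ℝ, g u ≤ D δ s := by
      intro u
      have h1 : closure (Set.range ((↑) : ℚ → ℝ)) ⊆ {u : ℝ | g u ≤ D δ s} :=
        hclosed.closure_subset_iff.2 hsub
      have h2 := Rat.denseRange_cast (𝕜 := ℝ)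
      have : u ∈ closure (Set.range ((↑) : ℚ → ℝ)) := h2 u
      exact h1 this
    have hterm : ‖f (t + δ + s) - f (t + δ) - (f (t + s) - f t)‖ ≤ 2 * M1 := by
      have b1 : ‖f ((t + δ) + s) - f (t + δ)‖ ≤ M1 := hM1 s hs (t + δ)
      have b2 : ‖f (t + s) - f t‖ ≤ M1 := hM1 s hs t
      calc ‖_ - _‖ ≤ ‖f ((t + δ) + s) - f (t + δ)‖ + ‖f (t + s) - f t‖ := norm_sub_le _ _
      _ ≤ 2 * M1 := by linarith
    have h2 : min ‖f (t + δ + s) - f (t + δ) - (f (t + s) - f t)‖ C ≤ D δ s := hall t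
    rwa [min_eq_left (by simp only [hC]; linarith)] at h2
  have hmeas : ∀ δ : ℝ, Measurable (D δ) := by
    intro δ
    have : LowerSemicontinuous (D δ) := by
      apply lowerSemicontinuous_ciSup (fun s => hbdd δ s)
      intro q
      apply Continuous.lowerSemicontinuous
      apply Continuous.min _ continuous_const
      exact (((hf.comp (continuous_const.add continuous_id)).sub continuous_const).sub
        ((hf.comp (continuous_const.add continuous_id)).sub continuous_const)).norm
    exact this.measurable
  have hint : ∀ δ : ℝ, IntegrableOn (D δ) (Set.Ioc (0:ℝ) 1) := by
    intro δ
    refine (integrable_const C).mono' ((hmeas δ).aestronglyMeasurable) ?_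
    exact ae_of_all _ fun s => by
      rw [Real.norm_eq_abs, abs_of_nonneg (hDnn δ s)]; exact hDleC δ s
  have tendsto_D : ∀ s ∈ Set.Icc (0:ℝ) 1, Tendsto (fun δ => D δ s) (𝓝 0) (𝓝 0) := by
    intro s hs
    rcases eq_or_lt_of_le hs.1 with h0 | hspos
    · have hz : ∀ δ : ℝ, D δ s = 0 := by
        intro δ
        have he : (fun q : ℚ => min ‖f ((q:ℝ) + δ + s) - f ((q:ℝ) + δ) - (f ((q:ℝ) + s) - f (q:ℝ))‖ C)
            = fun _ : ℚ => (0:ℝ) := by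
          funext q
          rw [← h0]
          simp [hCpos.le]
        rw [hD]
        simp only [he]
        exact ciSup_const
      simp only [hz]
      exact tendsto_const_nhds
    · have huc := hUC s hspos
      rw [Metric.uniformContinuous_iff] at huc
      rw [Metric.tendsto_nhds]
      intro ε hε
      obtain ⟨δ₀, hδ₀, hcl⟩ := huc (ε/2) (by positivity)
      rw [Metric.eventually_nhds_iff]
      refine ⟨δ₀, hδ₀, fun {δ} hδ => ?_⟩
      have hδ' : |δ| < δ₀ := by rwa [Real.dist_eq, sub_zero] at hδ
      have hDle : D δ s ≤ ε/2 := by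
        apply ciSup_le
        intro q
        have hdq : dist ((q:ℝ) + δ) (q:ℝ) < δ₀ := by
          rw [Real.dist_eq]; simpa using hδ'
        have := hcl hdq
        rw [dist_eq_norm] at this
        refine le_trans (min_le_left _ _) ?_
        have heq : f ((q:ℝ) + δ + s) - f ((q:ℝ) + δ) - (f ((q:ℝ) + s) - f (q:ℝ))
            = (fun t => f (t + s) - f t) ((q:ℝ) + δ) - (fun t => f (t + s) - f t) (q:ℝ) := by
          simp
        rw [heq]
        exact this.le
      rw [Real.dist_eq, sub_zero, abs_of_nonneg (hDnn δ s)]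
      linarith
  have dct : Tendsto (fun δ => ∫ s in Set.Ioc (0:ℝ) 1, D δ s) (𝓝 (0:ℝ)) (𝓝 0) := by
    have := MeasureTheory.tendsto_integral_filter_of_dominated_convergence (μ := volume.restrict (Set.Ioc (0:ℝ) 1))
      (F := fun δ s => D δ s) (f := fun _ => (0:ℝ)) (bound := fun _ => C) (l := 𝓝 (0:ℝ))
      (Eventually.of_forall fun δ => (hmeas δ).aestronglyMeasurable)
      (Eventually.of_forall fun δ => ae_of_all _ fun s => by
        rw [Real.norm_eq_abs, abs_of_nonneg (hDnn δ s)]; exact hDleC δ s)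
      (integrable_const C)
      ?_
    · simpa using this
    · refine (ae_restrict_iff' measurableSet_Ioc).2 (ae_of_all _ fun s hs => ?_)
      exact tendsto_D s ⟨hs.1.le, hs.2⟩
  have key : ∀ δ t : ℝ, ‖f (t + δ) - f t‖ ≤ |δ| * K1 + ∫ s in Set.Ioc (0:ℝ) 1, D δ s := by
    intro δ t
    have hi : ∀ a b : ℝ, IntervalIntegrable f volume a b := fun a b => hf.intervalIntegrable a b
    have hc1 : Continuous fun s : ℝ => f (t + δ + s) := hf.comp (continuous_const.add continuous_id)
    have hc2 : Continuous fun s : ℝ => f (t + s) := hf.comp (continuous_const.add continuous_id)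
    have hi1 : IntervalIntegrable (fun s => f (t + δ + s)) volume 0 1 := hc1.intervalIntegrable 0 1
    have hi2 : IntervalIntegrable (fun s => f (t + s)) volume 0 1 := hc2.intervalIntegrable 0 1
    set I1 := ∫ s in (0:ℝ)..1, f (t + δ + s) with hI1
    set I2 := ∫ s in (0:ℝ)..1, f (t + s) with hI2
    have e1 : I1 = ∫ u in (t+δ)..(t+δ+1), f u := by
      rw [hI1]
      simpa using intervalIntegral.integral_comp_add_left (a := (0:ℝ)) (b := 1) f (t+δ)
    have e2 : I2 = ∫ u in t..(t+1), f u := by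
      rw [hI2]
      simpa using intervalIntegral.integral_comp_add_left (a := (0:ℝ)) (b := 1) f t
    have e3 : (∫ u in t..(t+δ), f (u+1)) = ∫ u in (t+1)..(t+δ+1), f u := by
      simpa using intervalIntegral.integral_comp_add_right (a := t) (b := t+δ) f 1
    have chasles1 : (∫ u in (t+δ)..(t+1), f u) + ∫ u in (t+1)..(t+δ+1), f u
        = ∫ u in (t+δ)..(t+δ+1), f u :=
      intervalIntegral.integral_add_adjacent_intervals (hi _ _) (hi _ _)
    have chasles2 : (∫ u in t..(t+δ), f u) + ∫ u in (t+δ)..(t+1), f u = ∫ u in t..(t+1), f u :=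
      intervalIntegral.integral_add_adjacent_intervals (hi _ _) (hi _ _)
    have hc3 : Continuous fun u : ℝ => f (u + 1) := hf.comp (continuous_id.add continuous_const)
    have idA : I1 - I2 = ∫ u in t..(t+δ), (f (u+1) - f u) := by
      rw [intervalIntegral.integral_sub (hc3.intervalIntegrable _ _) (hi _ _),
        e1, e2, e3, ← chasles1, ← chasles2]
      abel
    have bndA : ‖I1 - I2‖ ≤ K1 * |δ| := by
      rw [idA]
      have hb := intervalIntegral.norm_integral_le_of_norm_le_const (C := K1) (a := t) (b := t+δ)
        (f := fun u => f (u+1) - f u) (fun x _ => hK1 x)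
      simpa using hb
    have eψ : (∫ s in (0:ℝ)..1, (f (t + δ + s) - f (t + δ) - (f (t + s) - f t)))
        = I1 - I2 - (f (t+δ) - f t) := by
      rw [intervalIntegral.integral_sub (hi1.sub intervalIntegrable_const)
          (hi2.sub intervalIntegrable_const),
        intervalIntegral.integral_sub hi1 intervalIntegrable_const,
        intervalIntegral.integral_sub hi2 intervalIntegrable_const,
        intervalIntegral.integral_const, intervalIntegral.integral_const]
      simp only [sub_zero, one_smul]
      abel
    have idB : f (t + δ) - f t
        = (I1 - I2) - ∫ s in (0:ℝ)..1, (f (t + δ + s) - f (t + δ) - (f (t + s) - f t)) := by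
      rw [eψ]; abel
    have hiD : IntervalIntegrable (D δ) volume 0 1 :=
      (intervalIntegrable_iff_integrableOn_Ioc_of_le zero_le_one).2 (hint δ)
    have bndB : ‖∫ s in (0:ℝ)..1, (f (t + δ + s) - f (t + δ) - (f (t + s) - f t))‖
        ≤ ∫ s in Set.Ioc (0:ℝ) 1, D δ s := by
      have h1 := intervalIntegral.norm_integral_le_integral_norm (μ := volume) (a := (0:ℝ)) (b := 1)
        (f := fun s => f (t + δ + s) - f (t + δ) - (f (t + s) - f t)) zero_le_one
      have h2 : (∫ s in (0:ℝ)..1, ‖f (t + δ + s) - f (t + δ) - (f (t + s) - f t)‖)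
          ≤ ∫ s in (0:ℝ)..1, D δ s := by
        apply intervalIntegral.integral_mono_on zero_le_one
          (((hc1.sub continuous_const).sub (hc2.sub continuous_const)).norm.intervalIntegrable 0 1)
          hiD
        intro s hs
        exact realbound δ s hs t
      have h3 : (∫ s in (0:ℝ)..1, D δ s) = ∫ s in Set.Ioc (0:ℝ) 1, D δ s :=
        intervalIntegral.integral_of_le zero_le_one
      linarith
    calc ‖f (t + δ) - f t‖
        = ‖(I1 - I2) - ∫ s in (0:ℝ)..1, (f (t + δ + s) - f (t + δ) - (f (t + s) - f t))‖ := by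
          rw [← idB]
    _ ≤ ‖I1 - I2‖ + ‖∫ s in (0:ℝ)..1, (f (t + δ + s) - f (t + δ) - (f (t + s) - f t))‖ :=
          norm_sub_le _ _
    _ ≤ K1 * |δ| + ∫ s in Set.Ioc (0:ℝ) 1, D δ s := add_le_add bndA bndB
    _ = |δ| * K1 + ∫ s in Set.Ioc (0:ℝ) 1, D δ s := by ring
  -- conclude
  have htend : Tendsto (fun δ : ℝ => |δ| * K1 + ∫ s in Set.Ioc (0:ℝ) 1, D δ s) (𝓝 0) (𝓝 0) := by
    have h1 : Tendsto (fun δ : ℝ => |δ| * K1) (𝓝 0) (𝓝 0) := by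
      have : Continuous fun δ : ℝ => |δ| * K1 := continuous_abs.mul continuous_const
      simpa using this.tendsto 0
    simpa using h1.add dct
  rw [Metric.uniformContinuous_iff]
  intro ε hε
  have : ∀ᶠ δ : ℝ in 𝓝 0, |δ| * K1 + (∫ s in Set.Ioc (0:ℝ) 1, D δ s) < ε := by
    have := htend (Iio_mem_nhds hε)
    filter_upwards [this] with δ hδ
    exact hδ
  rw [Metric.eventually_nhds_iff] at this
  obtain ⟨δ₀, hδ₀, hball⟩ := this
  refine ⟨δ₀, hδ₀, fun {a b} hab => ?_⟩
  have h1 : dist (a - b) (0:ℝ) < δ₀ := by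
    rw [Real.dist_eq] at hab ⊢; simpa using hab
  have h2 := hball h1
  calc dist (f a) (f b) = ‖f (b + (a - b)) - f b‖ := by
        rw [dist_eq_norm]; congr 2; ring
  _ ≤ |a - b| * K1 + ∫ s in Set.Ioc (0:ℝ) 1, D (a-b) s := key (a-b) b
  _ < ε := h2

end

lemma RelDense.mono' {E E' : Set ℝ} (h : E ⊆ E') (hE : RelDense E) : RelDense E' := by
  obtain ⟨L, hL, hall⟩ := hE
  exact ⟨L, hL, fun a => ((hall a).mono (inter_subset_inter_left _ h))⟩

section
variable {X : Type*} [NormedAddCommGroup X] [NormedSpace ℝ X] [CompleteSpace X]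

lemma shift_int (f : ℝ → X) (hf : Continuous f) (k t : ℝ) :
    (∫ s in (0:ℝ)..k, f (t + s)) = ∫ u in t..(t+k), f u := by
  simpa using intervalIntegral.integral_comp_add_left (a := (0:ℝ)) (b := k) f t

lemma uc_Mk (f : ℝ → X) (hf : Continuous f) {k : ℝ} (hk : 0 < k)
    {Mk : ℝ} (hMk : ∀ t, ‖f (t + k) - f t‖ ≤ Mk) :
    UniformContinuous fun t => ∫ s in (0:ℝ)..k, f (t + s) := by
  have hMknn : 0 ≤ Mk := le_trans (norm_nonneg _) (hMk 0)
  have hi : ∀ a b : ℝ, IntervalIntegrable f volume a b := fun a b => hf.intervalIntegrable a b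
  have key : ∀ t t' : ℝ, ‖(∫ s in (0:ℝ)..k, f (t' + s)) - ∫ s in (0:ℝ)..k, f (t + s)‖
      ≤ Mk * |t' - t| := by
    intro t t'
    rw [shift_int f hf k t, shift_int f hf k t']
    have c1 : (∫ u in t'..(t+k), f u) + ∫ u in (t+k)..(t'+k), f u = ∫ u in t'..(t'+k), f u :=
      intervalIntegral.integral_add_adjacent_intervals (hi _ _) (hi _ _)
    have c2 : (∫ u in t..t', f u) + ∫ u in t'..(t+k), f u = ∫ u in t..(t+k), f u :=
      intervalIntegral.integral_add_adjacent_intervals (hi _ _) (hi _ _)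
    have e3 : (∫ u in t..t', f (u+k)) = ∫ u in (t+k)..(t'+k), f u := by
      simpa using intervalIntegral.integral_comp_add_right (a := t) (b := t') f k
    have hc3 : Continuous fun u : ℝ => f (u + k) := hf.comp (continuous_id.add continuous_const)
    have idA : (∫ u in t'..(t'+k), f u) - ∫ u in t..(t+k), f u
        = ∫ u in t..t', (f (u+k) - f u) := by
      rw [intervalIntegral.integral_sub (hc3.intervalIntegrable _ _) (hi _ _), e3,
        ← c1, ← c2]
      abel
    rw [idA]
    have := intervalIntegral.norm_integral_le_of_norm_le_const (C := Mk) (a := t) (b := t')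
      (f := fun u => f (u+k) - f u) (fun x _ => hMk x)
    simpa using this
  rw [Metric.uniformContinuous_iff]
  intro ε hε
  refine ⟨ε / (Mk + 1), by positivity, fun {a b} hab => ?_⟩
  rw [dist_eq_norm]
  calc ‖_ - _‖ ≤ Mk * |a - b| := key b a
  _ ≤ Mk * (ε / (Mk+1)) := by
      apply mul_le_mul_of_nonneg_left _ hMknn
      rw [Real.dist_eq] at hab
      exact hab.le
  _ < ε := by
      rw [div_eq_inv_mul]
      have h1 : Mk * ((Mk+1)⁻¹ * ε) = (Mk / (Mk+1)) * ε := by ring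
      rw [h1]
      have h2 : Mk / (Mk+1) < 1 := by
        rw [div_lt_one (by positivity)]; linarith
      nlinarith

-- identity H3
lemma gk_eq (f : ℝ → X) (hf : Continuous f) {k : ℝ} (hk : 0 < k) (t : ℝ) :
    f t - (1 / k) • ∫ s in (0:ℝ)..k, f (t + s)
      = -(1 / k) • ∫ s in (0:ℝ)..k, (f (t + s) - f t) := by
  have hc2 : Continuous fun s : ℝ => f (t + s) := hf.comp (continuous_const.add continuous_id)
  rw [intervalIntegral.integral_sub (hc2.intervalIntegrable _ _) intervalIntegrable_const,
    intervalIntegral.integral_const, smul_sub, smul_smul]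
  have h1 : -(1 / k) * (k - 0) = -1 := by field_simp; ring
  rw [h1, neg_smul, neg_smul, one_smul]
  abel

lemma gk_diff (f : ℝ → X) (hf : Continuous f) {k : ℝ} (hk : 0 < k) (t τ : ℝ) :
    (f (t + τ) - (1 / k) • ∫ s in (0:ℝ)..k, f (t + τ + s))
      - (f t - (1 / k) • ∫ s in (0:ℝ)..k, f (t + s))
    = -(1 / k) • ∫ s in (0:ℝ)..k, ((f (t + τ + s) - f (t + τ)) - (f (t + s) - f t)) := by
  have hca : Continuous fun s : ℝ => f (t + τ + s) := hf.comp (continuous_const.add continuous_id)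
  have hcb : Continuous fun s : ℝ => f (t + s) := hf.comp (continuous_const.add continuous_id)
  rw [gk_eq f hf hk (t+τ), gk_eq f hf hk t, ← smul_sub, ← intervalIntegral.integral_sub (f := fun s => f (t + τ + s) - f (t + τ))
    (g := fun s => f (t + s) - f t)
    ((hca.sub continuous_const).intervalIntegrable _ _)
    ((hcb.sub continuous_const).intervalIntegrable _ _)]

lemma rec_gk (f : ℝ → X) (hf : Continuous f) (hucf : UniformContinuous f)
    (hrec : ∀ h > (0:ℝ), ∀ ε > (0:ℝ), ∀ K : Set ℝ, IsCompact K →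
      RelDense (Eset (fun t => f (t + h) - f t) ε K))
    {k : ℝ} (hk : 0 < k) :
    ∀ ε > (0:ℝ), ∀ K : Set ℝ, IsCompact K →
      RelDense (Eset (fun t => f t - (1 / k) • ∫ s in (0:ℝ)..k, f (t + s)) ε K) := by
  intro ε hε K hK
  rcases K.eq_empty_or_nonempty with rfl | hKne
  · exact ⟨0, le_refl 0, fun a => ⟨a, by simp [Eset], by simp⟩⟩
  obtain ⟨θ, hθpos, hθ⟩ := Metric.uniformContinuous_iff.1 hucf (ε/4) (by positivity)
  obtain ⟨n, hn⟩ := exists_nat_gt (k / θ)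
  have hnpos : 0 < (n:ℝ) := lt_of_le_of_lt (by positivity) hn
  set s₁ : ℝ := k / n with hs₁
  have hs₁pos : 0 < s₁ := by positivity
  have hs₁θ : s₁ < θ := by
    rw [hs₁, div_lt_iff₀ hnpos]
    rw [div_lt_iff₀ hθpos] at hn
    linarith
  set a' := sInf K with ha'
  set b' := sSup K with hb'
  have hKsub : K ⊆ Set.Icc a' b' := fun x hx => ⟨csInf_le hK.bddBelow hx, le_csSup hK.bddAbove hx⟩
  set K' : Set ℝ := Set.Icc a' (b' + k) with hK'def
  have hK' : IsCompact K' := isCompact_Icc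
  set ε' : ℝ := ε / (4 * n) with hε'def
  have hε' : 0 < ε' := by positivity
  have hE := hrec s₁ hs₁pos ε' hε' K' hK'
  refine hE.mono' ?_
  intro τ hτ
  simp only [Eset, Set.mem_setOf_eq] at hτ ⊢
  have claim1 : ∀ j : ℕ, (j:ℝ) * s₁ ≤ k → ∀ t ∈ K,
      ‖(f (t + τ + (j:ℝ) * s₁) - f (t + τ)) - (f (t + (j:ℝ) * s₁) - f t)‖ ≤ (j:ℝ) * ε' := by
    intro j
    induction j with
    | zero => intro _ t _; simp
    | succ j ih =>
      intro hjk t ht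
      have hj1 : ((j:ℕ)+1 : ℕ) * s₁ = ((j:ℝ)+1) * s₁ := by push_cast; ring
      have hjk2 : ((j:ℝ)+1) * s₁ ≤ k := by rw [← hj1]; exact_mod_cast hjk
      have hjk' : (j:ℝ) * s₁ ≤ k := by nlinarith
      have h1 := ih hjk' t ht
      have htK' : t + (j:ℝ) * s₁ ∈ K' := by
        obtain ⟨hta, htb⟩ := hKsub ht
        have hnn : 0 ≤ (j:ℝ) * s₁ := by positivity
        have hub : (j:ℝ) * s₁ ≤ k := hjk'
        exact ⟨by linarith, by linarith⟩
      have h2 := hτ _ htK'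
      have hab : (f (t + τ + ((j:ℝ)+1) * s₁) - f (t + τ)) - (f (t + ((j:ℝ)+1) * s₁) - f t)
          = ((f (t + τ + (j:ℝ) * s₁) - f (t + τ)) - (f (t + (j:ℝ) * s₁) - f t))
            + ((f (t + (j:ℝ)*s₁ + τ + s₁) - f (t + (j:ℝ)*s₁ + τ)) - (f (t + (j:ℝ)*s₁ + s₁) - f (t + (j:ℝ)*s₁))) := by
        have e1 : t + τ + ((j:ℝ)+1) * s₁ = t + (j:ℝ)*s₁ + τ + s₁ := by ring
        have e2 : t + ((j:ℝ)+1) * s₁ = t + (j:ℝ)*s₁ + s₁ := by ring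
        have e3 : t + τ + (j:ℝ) * s₁ = t + (j:ℝ)*s₁ + τ := by ring
        rw [e1, e2, e3]; abel
      push_cast
      rw [hab]
      calc ‖_ + _‖ ≤ _ + _ := norm_add_le _ _
      _ ≤ (j:ℝ)*ε' + ε' := add_le_add h1 h2
      _ = ((j:ℝ)+1)*ε' := by ring
  have claim2 : ∀ s ∈ Set.Icc (0:ℝ) k, ∀ t ∈ K,
      ‖(f (t + τ + s) - f (t + τ)) - (f (t + s) - f t)‖ ≤ 3*ε/4 := by
    intro s hs t ht
    set j : ℕ := ⌊s / s₁⌋₊ with hj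
    have hfl := Nat.floor_le (div_nonneg hs.1 hs₁pos.le)
    have hjn : (j:ℝ) ≤ n := by
      have h1 : s / s₁ ≤ n := by
        rw [div_le_iff₀ hs₁pos, hs₁]
        field_simp
        exact hs.2
      exact le_trans hfl h1
    have hjs : (j:ℝ) * s₁ ≤ s := by
      calc (j:ℝ) * s₁ ≤ (s / s₁) * s₁ := by nlinarith
      _ = s := div_mul_cancel₀ s hs₁pos.ne'
    have hsj : s - (j:ℝ)*s₁ < s₁ := by
      have h2 := Nat.lt_floor_add_one (s / s₁)
      have h3 : s < ((j:ℝ)+1) * s₁ := by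
        rw [div_lt_iff₀ hs₁pos] at h2
        push_cast at h2 ⊢
        linarith
      linarith
    have hjk : (j:ℝ) * s₁ ≤ k := le_trans hjs hs.2
    have h1 := claim1 j hjk t ht
    have hA : ‖f (t + τ + s) - f (t + τ + (j:ℝ)*s₁)‖ ≤ ε/4 := by
      have hd : dist (t + τ + s) (t + τ + (j:ℝ)*s₁) < θ := by
        rw [Real.dist_eq, show t + τ + s - (t + τ + (j:ℝ)*s₁) = s - (j:ℝ)*s₁ by ring,
          abs_of_nonneg (by linarith)]
        linarith
      have := hθ hd
      rw [dist_eq_norm] at this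
      exact this.le
    have hB : ‖f (t + s) - f (t + (j:ℝ)*s₁)‖ ≤ ε/4 := by
      have hd : dist (t + s) (t + (j:ℝ)*s₁) < θ := by
        rw [Real.dist_eq, show t + s - (t + (j:ℝ)*s₁) = s - (j:ℝ)*s₁ by ring,
          abs_of_nonneg (by linarith)]
        linarith
      have := hθ hd
      rw [dist_eq_norm] at this
      exact this.le
    have hsplit : (f (t + τ + s) - f (t + τ)) - (f (t + s) - f t)
        = ((f (t + τ + (j:ℝ)*s₁) - f (t + τ)) - (f (t + (j:ℝ)*s₁) - f t))
          + ((f (t + τ + s) - f (t + τ + (j:ℝ)*s₁)) - (f (t + s) - f (t + (j:ℝ)*s₁))) := by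
      abel
    rw [hsplit]
    have hjε : (j:ℝ) * ε' ≤ ε/4 := by
      have h4 : ε' * (4*(n:ℝ)) = ε := by rw [hε'def]; field_simp
      nlinarith [mul_nonneg (sub_nonneg.2 hjn) hε'.le]
    calc ‖_ + _‖ ≤ ‖f (t + τ + (j:ℝ) * s₁) - f (t + τ) - (f (t + (j:ℝ) * s₁) - f t)‖
        + ‖f (t + τ + s) - f (t + τ + (j:ℝ) * s₁) - (f (t + s) - f (t + (j:ℝ) * s₁))‖ :=
        norm_add_le _ _
    _ ≤ (j:ℝ) * ε' + (‖f (t + τ + s) - f (t + τ + (j:ℝ) * s₁)‖ + ‖f (t + s) - f (t + (j:ℝ) * s₁)‖) :=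
        add_le_add h1 (norm_sub_le _ _)
    _ ≤ ε/4 + (ε/4 + ε/4) := add_le_add hjε (add_le_add hA hB)
    _ ≤ 3*ε/4 := by linarith
  intro t ht
  rw [gk_diff f hf hk t τ, norm_smul]
  have hb := intervalIntegral.norm_integral_le_of_norm_le_const (C := 3*ε/4) (a := (0:ℝ)) (b := k)
    (f := fun s => (f (t + τ + s) - f (t + τ)) - (f (t + s) - f t)) ?_
  · have h1 : ‖-(1/k)‖ = 1/k := by
      rw [norm_neg, Real.norm_eq_abs, abs_of_pos (by positivity)]
    rw [h1]
    have h2 : |k - 0| = k := by rw [sub_zero, abs_of_pos hk]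
    rw [h2] at hb
    calc (1/k) * ‖_‖ ≤ (1/k) * (3*ε/4 * k) := by
          apply mul_le_mul_of_nonneg_left hb (by positivity)
    _ = 3*ε/4 := by field_simp
    _ ≤ ε := by linarith
  · intro x hx
    have hx' : x ∈ Set.Icc (0:ℝ) k := by
      rw [Set.uIoc_of_le hk.le] at hx
      exact ⟨hx.1.le, hx.2⟩
    exact claim2 x hx' t ht

lemma cpt_gk (f : ℝ → X) (hf : Continuous f) (hucf : UniformContinuous f)
    (hcp : ∀ h > (0:ℝ), IsCompact (closure (Set.range (fun t => f (t + h) - f t))))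
    {k : ℝ} (hk : 0 < k) :
    IsCompact (closure (Set.range (fun t => f t - (1 / k) • ∫ s in (0:ℝ)..k, f (t + s)))) := by
  set g := fun t => f t - (1 / k) • ∫ s in (0:ℝ)..k, f (t + s) with hg
  have key : ∀ ε > (0:ℝ), ∃ S : Set X, IsCompact S ∧ ∀ t, ∃ y ∈ S, ‖g t - y‖ ≤ ε := by
    intro ε hε
    obtain ⟨θ, hθpos, hθ⟩ := Metric.uniformContinuous_iff.1 hucf ε hε
    obtain ⟨n, hn⟩ := exists_nat_gt (k / θ)
    have hnpos : 0 < (n:ℝ) := lt_of_le_of_lt (by positivity) hn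
    have hnpos' : 0 < n := by exact_mod_cast hnpos
    set s₁ : ℝ := k / n with hs₁
    have hs₁pos : 0 < s₁ := by positivity
    have hs₁θ : s₁ < θ := by
      rw [hs₁, div_lt_iff₀ hnpos]
      rw [div_lt_iff₀ hθpos] at hn
      linarith
    set sj : ℕ → ℝ := fun j => ((j:ℝ) + 1) * s₁ with hsj
    have hsjpos : ∀ j : ℕ, 0 < sj j := by
      intro j
      have : (0:ℝ) ≤ (j:ℝ) := Nat.cast_nonneg j
      rw [hsj]; positivity
    set C : Fin n → Set X := fun j => closure (Set.range (fun t => f (t + sj j) - f t)) with hC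
    have hCcp : ∀ j, IsCompact (C j) := fun j => hcp _ (hsjpos j)
    set T : (Fin n → X) → X := fun v => (-(1/(n:ℝ))) • ∑ j, v j with hT
    have hTc : Continuous T := (continuous_finset_sum _ fun j _ => continuous_apply j).const_smul _
    refine ⟨T '' (Set.univ.pi C), (isCompact_univ_pi hCcp).image hTc, fun t => ?_⟩
    set v : Fin n → X := fun j => f (t + sj j) - f t with hv
    have hvmem : v ∈ Set.univ.pi C := fun j _ => subset_closure (Set.mem_range_self t)
    refine ⟨T v, Set.mem_image_of_mem T hvmem, ?_⟩
    -- now the Riemann approximation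
    set a : ℕ → ℝ := fun i => i * s₁ with ha
    have ha0 : a 0 = 0 := by simp [ha]
    have han : a n = k := by rw [ha, hs₁]; field_simp
    have hcont : ∀ b c : ℝ, IntervalIntegrable (fun s => f (t + s) - f t) volume b c := by
      intro b c
      exact ((hf.comp (continuous_const.add continuous_id)).sub continuous_const).intervalIntegrable b c
    have hsum : ∑ i ∈ Finset.range n, (∫ s in (a i)..(a (i+1)), (f (t + s) - f t))
        = ∫ s in (0:ℝ)..k, (f (t + s) - f t) := by
      rw [← ha0, ← han]
      exact intervalIntegral.sum_integral_adjacent_intervals (fun i _ => hcont _ _)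
    have hTv : T v = -(1/k) • ∑ i ∈ Finset.range n, s₁ • (f (t + sj i) - f t) := by
      show -(1 / (n:ℝ)) • ∑ j : Fin n, v j = _
      have hse : ∑ j : Fin n, v j = ∑ i ∈ Finset.range n, (f (t + sj i) - f t) :=
        Fin.sum_univ_eq_sum_range (fun i => f (t + sj i) - f t) n
      rw [hse, Finset.smul_sum, Finset.smul_sum]
      apply Finset.sum_congr rfl
      intro i _
      rw [smul_smul]
      congr 1
      rw [hs₁]
      field_simp
    have hgt : g t = -(1/k) • ∑ i ∈ Finset.range n, ∫ s in (a i)..(a (i+1)), (f (t + s) - f t) := by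
      rw [hg]
      simp only []
      rw [gk_eq f hf hk t, hsum]
    have hdiff : g t - T v = -(1/k) • ∑ i ∈ Finset.range n,
        ((∫ s in (a i)..(a (i+1)), (f (t + s) - f t)) - s₁ • (f (t + sj i) - f t)) := by
      rw [hgt, hTv, ← smul_sub, ← Finset.sum_sub_distrib]
    have hpiece : ∀ i ∈ Finset.range n,
        ‖(∫ s in (a i)..(a (i+1)), (f (t + s) - f t)) - s₁ • (f (t + sj i) - f t)‖ ≤ ε * s₁ := by
      intro i _
      have hconst : s₁ • (f (t + sj i) - f t) = ∫ s in (a i)..(a (i+1)), (f (t + sj i) - f t) := by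
        rw [intervalIntegral.integral_const]
        congr 1
        rw [ha]; push_cast; ring
      rw [hconst, ← intervalIntegral.integral_sub (hcont _ _) intervalIntegrable_const]
      have hb := intervalIntegral.norm_integral_le_of_norm_le_const (C := ε) (a := a i) (b := a (i+1))
        (f := fun s => (f (t + s) - f t) - (f (t + sj i) - f t)) ?_
      · have : |a (i+1) - a i| = s₁ := by
          rw [ha]; push_cast
          rw [show ((i:ℝ)+1) * s₁ - (i:ℝ) * s₁ = s₁ by ring]
          exact abs_of_pos hs₁pos
        rw [this] at hb
        exact hb
      · intro x hx
        have hle : a i ≤ a (i+1) := by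
          rw [ha]; push_cast
          nlinarith [hs₁pos.le, (Nat.cast_nonneg i : (0:ℝ) ≤ (i:ℝ))]
        rw [Set.uIoc_of_le hle] at hx
        show ‖f (t + x) - f t - (f (t + sj i) - f t)‖ ≤ ε
        have e1 : (f (t + x) - f t) - (f (t + sj i) - f t) = f (t + x) - f (t + sj i) := by abel
        rw [e1]
        have hd : dist (t + x) (t + sj i) < θ := by
          rw [Real.dist_eq, show t + x - (t + sj i) = x - sj i by ring]
          have hx1 : (i:ℝ) * s₁ < x := by
            have := hx.1
            rw [ha] at this
            exact this
          have hx2 : x ≤ ((i:ℝ)+1) * s₁ := by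
            have := hx.2
            rw [ha] at this
            push_cast at this
            linarith
          have hsji : sj i = ((i:ℝ)+1) * s₁ := rfl
          rw [hsji, abs_of_nonpos (by linarith)]
          linarith
        have := hθ hd
        rw [dist_eq_norm] at this
        exact this.le
    rw [hdiff, norm_smul]
    have h1 : ‖-(1/k)‖ = 1/k := by
      rw [Real.norm_eq_abs, abs_neg, abs_of_pos (by positivity)]
    rw [h1]
    calc 1/k * ‖∑ i ∈ Finset.range n, _‖
        ≤ 1/k * ∑ i ∈ Finset.range n, ‖(∫ s in (a i)..(a (i+1)), (f (t + s) - f t)) - s₁ • (f (t + sj i) - f t)‖ := by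
          apply mul_le_mul_of_nonneg_left (norm_sum_le _ _) (by positivity)
    _ ≤ 1/k * ∑ i ∈ Finset.range n, (ε * s₁) := by
          apply mul_le_mul_of_nonneg_left (Finset.sum_le_sum hpiece) (by positivity)
    _ = 1/k * (n * (ε * s₁)) := by simp [Finset.sum_const, Finset.card_range, nsmul_eq_mul]
    _ = ε := by rw [hs₁]; field_simp
  -- total boundedness
  have tb : TotallyBounded (Set.range g) := by
    rw [Metric.totallyBounded_iff]
    intro ε hε
    obtain ⟨S, hScp, happ⟩ := key (ε/4) (by positivity)
    obtain ⟨F, hF, hcover⟩ := Metric.totallyBounded_iff.1 hScp.totallyBounded (ε/4) (by positivity)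
    refine ⟨F, hF, ?_⟩
    rintro _ ⟨t, rfl⟩
    obtain ⟨y, hyS, hy⟩ := happ t
    have := hcover hyS
    rw [Set.mem_iUnion₂] at this
    obtain ⟨x, hxF, hyx⟩ := this
    rw [Set.mem_iUnion₂]
    refine ⟨x, hxF, ?_⟩
    rw [Metric.mem_ball] at hyx ⊢
    calc dist (g t) x ≤ dist (g t) y + dist y x := dist_triangle _ _ _
    _ ≤ ε/4 + dist y x := by
        rw [dist_eq_norm]; exact add_le_add hy le_rfl
    _ < ε := by linarith
  exact TotallyBounded.isCompact_of_isClosed tb.closure isClosed_closure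

end


/-- If all differences `Δ_h f`, `h > 0`, of a continuous `f` are recurrent, uniformly
continuous with relatively compact range, then `f` is uniformly continuous and each
`f - M_k f`, `k > 0`, is recurrent, uniformly continuous with relatively compact range. -/
theorem delta_property_recurrent_urc {X : Type*} [NormedAddCommGroup X] [NormedSpace ℝ X]
    [CompleteSpace X] (f : ℝ → X) (hf : Continuous f)
    (hΔ : ∀ h > (0 : ℝ),
      Recurrent (fun t => f (t + h) - f t) ∧
      UniformContinuous (fun t => f (t + h) - f t) ∧
      IsCompact (closure (Set.range (fun t => f (t + h) - f t)))) :
    UniformContinuous f ∧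
    ∀ k > (0 : ℝ),
      Recurrent (fun t => f t - (1 / k) • ∫ s in (0 : ℝ)..k, f (t + s)) ∧
      UniformContinuous (fun t => f t - (1 / k) • ∫ s in (0 : ℝ)..k, f (t + s)) ∧
      IsCompact (closure
        (Set.range (fun t => f t - (1 / k) • ∫ s in (0 : ℝ)..k, f (t + s)))) := by
  have hbd : ∀ h : ℝ, ∃ M, ∀ t : ℝ, ‖f (t + h) - f t‖ ≤ M := by
    intro h
    rcases lt_trichotomy h 0 with hneg | rfl | hpos
    · obtain ⟨M, hM0, hM⟩ := bdd_of_cpt (hΔ (-h) (by linarith)).2.2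
      refine ⟨M, fun t => ?_⟩
      have h2 : ‖f (t + h + -h) - f (t + h)‖ ≤ M := hM (t + h)
      rw [show t + h + -h = t by ring] at h2
      rw [norm_sub_rev]
      exact h2
    · exact ⟨0, fun t => by simp⟩
    · obtain ⟨M, _, hM⟩ := bdd_of_cpt (hΔ h hpos).2.2
      exact ⟨M, fun t => hM t⟩
  have hM1 := bound_on_Icc f hf hbd 1
  have hucf : UniformContinuous f := uc_of_delta f hf hbd hM1 (fun h hh => (hΔ h hh).2.1)
  refine ⟨hucf, fun k hk => ?_⟩
  obtain ⟨Mk, _, hMk⟩ := bdd_of_cpt (hΔ k hk).2.2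
  have hucM : UniformContinuous fun t => ∫ s in (0:ℝ)..k, f (t + s) := uc_Mk f hf hk hMk
  have hucg : UniformContinuous fun t => f t - (1 / k) • ∫ s in (0:ℝ)..k, f (t + s) :=
    hucf.sub (hucM.const_smul (1/k))
  exact ⟨⟨hucg.continuous, rec_gk f hf hucf (fun h hh => (hΔ h hh).1.2) hk⟩, hucg,
    cpt_gk f hf hucf (fun h hh => (hΔ h hh).2.2) hk⟩
end

section
/- Let G be a topological abelian group, S a dense subset of G, X a Banach space, and f : G → X a bounded continuous function. Assume either c₀ ⊄ X, or that f(G) is relatively weakly sequentially complete. Then for every t ∈ G and every ε > 0 there exist δ > 0, m ∈ ℕ and r₁, …, r_m ∈ S such that every τ ∈ G with ‖Δ_{r_k} f(t + τ) − Δ_{r_k} f(t)‖ ≤ δ for all 1 ≤ k ≤ m satisfies ‖f(t + τ) − f(t)‖ ≤ ε. -/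
open Filter Topology ZeroAtInfty

/-- `c₀ ⊄ X`: no continuous linear map from `c₀ = C₀(ℕ, ℝ)` to `X` is bounded below. -/
def NoC0 (X : Type*) [NormedAddCommGroup X] [NormedSpace ℝ X] : Prop :=
  ¬ ∃ (T : C₀(ℕ, ℝ) →L[ℝ] X) (c : ℝ), 0 < c ∧ ∀ x : C₀(ℕ, ℝ), c * ‖x‖ ≤ ‖T x‖

/-- `M ⊆ X` is relatively weakly sequentially complete: every weakly Cauchy sequence
from `M` converges weakly to some element of `X`. -/
def RelWeakSeqComplete {X : Type*} [NormedAddCommGroup X] [NormedSpace ℝ X]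
    (M : Set X) : Prop :=
  ∀ x : ℕ → X, (∀ n, x n ∈ M) →
    (∀ φ : X →L[ℝ] ℝ, ∃ l : ℝ, Tendsto (fun n => φ (x n)) atTop (nhds l)) →
    ∃ a : X, ∀ φ : X →L[ℝ] ℝ, Tendsto (fun n => φ (x n)) atTop (nhds (φ a))

section helpers
variable {α : Type*}

/-- Generic "chain with choice" machinery. -/
noncomputable def bchain (d : α) (pick : (ℕ → α) → ℕ → α) : ℕ → ℕ → α
  | 0 => fun _ => d
  | (k+1) => Function.update (bchain d pick k) k (pick (bchain d pick k) k)

noncomputable def bseq (d : α) (pick : (ℕ → α) → ℕ → α) (k : ℕ) : α :=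
  pick (bchain d pick k) k

lemma bchain_eq (d : α) (pick : (ℕ → α) → ℕ → α) :
    ∀ {m n : ℕ}, n < m → bchain d pick m n = bseq d pick n := by
  intro m
  induction m with
  | zero => intro n h; omega
  | succ m ih =>
    intro n h
    rcases eq_or_lt_of_le (Nat.lt_succ_iff.mp h) with h' | h'
    · subst h'; simp [bchain, Function.update, bseq]
    · simp only [bchain]
      rw [Function.update_of_ne (by omega)]
      exact ih h'
end helpers

section X
variable {X : Type*} [NormedAddCommGroup X] [NormedSpace ℝ X]

/-- Hahn-Banach off a closed subspace. -/
lemma hb_off_subspace (F : Submodule ℝ X) [FiniteDimensional ℝ F] (x : X)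
    (hd : 0 < Metric.infDist x (F : Set X)) :
    ∃ φ : X →L[ℝ] ℝ, ‖φ‖ ≤ 1 ∧ (∀ y ∈ F, φ y = 0) ∧ φ x = Metric.infDist x (F : Set X) := by
  haveI : IsClosed (F : Set X) := F.closed_of_finiteDimensional
  set Q := X ⧸ F
  have hmkb : ∀ m : X, ‖(Submodule.Quotient.mk m : Q)‖ ≤ ‖m‖ :=
    fun m => Submodule.Quotient.norm_mk_le F m
  let mkC : X →L[ℝ] Q :=
    LinearMap.mkContinuous F.mkQ 1 (fun m => by rw [one_mul]; exact hmkb m)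
  have hnorm : ∀ m : X, ‖(Submodule.Quotient.mk m : Q)‖ = Metric.infDist m (F : Set X) := by
    intro m
    have : (Submodule.Quotient.mk m : Q) = ((m : X) : X ⧸ F.toAddSubgroup) := rfl
    exact QuotientAddGroup.norm_mk (S := F.toAddSubgroup) m
  have hx0 : (Submodule.Quotient.mk x : Q) ≠ 0 := by
    intro h
    have h2 := hnorm x
    rw [h, norm_zero] at h2; linarith
  obtain ⟨ψ, hψ1, hψx⟩ := exists_dual_vector ℝ (Submodule.Quotient.mk x : Q) (norm_ne_zero_iff.mpr hx0)
  refine ⟨ψ.comp mkC, ?_, ?_, ?_⟩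
  · calc ‖ψ.comp mkC‖ ≤ ‖ψ‖ * ‖mkC‖ := ψ.opNorm_comp_le mkC
    _ ≤ 1 * 1 := by
        rw [hψ1]
        exact mul_le_mul_of_nonneg_left
          (LinearMap.mkContinuous_norm_le _ zero_le_one _) zero_le_one
    _ = 1 := by ring
  · intro y hy
    have : (F.mkQ y : Q) = 0 := by simpa [Submodule.Quotient.mk_eq_zero] using hy
    simp [mkC, this]
  · have : mkC x = (Submodule.Quotient.mk x : Q) := rfl
    rw [ContinuousLinearMap.comp_apply, this]
    rw [hnorm x] at hψx
    exact_mod_cast hψx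

/-- Weakly null sequences with norms ≥ ε are eventually far from any f.d. subspace. -/
lemma eventual_dist (g : ℕ → X) (ε M : ℝ) (hε : 0 < ε)
    (hg : ∀ n, ε ≤ ‖g n‖) (hgM : ∀ n, ‖g n‖ ≤ M)
    (hw : ∀ φ : X →L[ℝ] ℝ, Tendsto (fun n => φ (g n)) atTop (𝓝 0))
    (F : Submodule ℝ X) [FiniteDimensional ℝ F] :
    ∀ᶠ n in atTop, ε/3 ≤ Metric.infDist (g n) (F : Set X) := by
  by_contra hcon
  rw [not_eventually] at hcon
  obtain ⟨m, hm, hmP⟩ := extraction_of_frequently_atTop hcon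
  push_neg at hmP
  have hFne : (F : Set X).Nonempty := ⟨0, F.zero_mem⟩
  have hv : ∀ i, ∃ v : F, ‖g (m i) - (v : X)‖ < ε/3 := by
    intro i
    obtain ⟨y, hyF, hy⟩ := (Metric.infDist_lt_iff hFne).mp (hmP i)
    exact ⟨⟨y, hyF⟩, by rwa [← dist_eq_norm]⟩
  choose v hvlt using hv
  have hvb : ∀ i, v i ∈ Metric.closedBall (0 : F) (M + ε) := by
    intro i
    rw [Metric.mem_closedBall, dist_zero_right]
    have h1 : ‖(v i : X)‖ ≤ ‖g (m i)‖ + ‖g (m i) - (v i : X)‖ := by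
      have heq : (v i : X) = g (m i) - (g (m i) - (v i : X)) := by abel
      calc ‖(v i : X)‖ = ‖g (m i) - (g (m i) - (v i : X))‖ := by rw [← heq]
      _ ≤ ‖g (m i)‖ + ‖g (m i) - (v i : X)‖ := norm_sub_le _ _
    have : ‖(v i : X)‖ ≤ M + ε/3 := le_trans h1 (by
      have := (hvlt i).le; have := hgM (m i); linarith)
    have hn : ‖v i‖ = ‖(v i : X)‖ := rfl
    linarith
  obtain ⟨v₀, _, σ, hσ, hvσ⟩ :=
    (isCompact_closedBall (0 : F) (M + ε)).tendsto_subseq hvb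
  -- ‖v₀‖ ≥ 2ε/3
  have hvnorm : ∀ i, (2/3) * ε ≤ ‖(v (σ i) : X)‖ := by
    intro i
    have h1 := hvlt (σ i)
    have h2 := hg (m (σ i))
    have h3 : ‖g (m (σ i))‖ ≤ ‖g (m (σ i)) - (v (σ i) : X)‖ + ‖(v (σ i) : X)‖ := by
      simpa using norm_add_le (g (m (σ i)) - (v (σ i) : X)) ((v (σ i) : X))
    linarith
  have hvc : Tendsto (fun i => ((v (σ i) : X))) atTop (𝓝 (v₀ : X)) :=
    ((continuous_subtype_val.tendsto v₀).comp hvσ)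
  have hv₀ : (2/3) * ε ≤ ‖(v₀ : X)‖ := ge_of_tendsto' (hvc.norm) hvnorm
  have hv₀ne : (v₀ : X) ≠ 0 := by
    intro h; rw [h, norm_zero] at hv₀; linarith
  obtain ⟨φ, hφ1, hφv⟩ := exists_dual_vector ℝ (v₀ : X) (norm_ne_zero_iff.mpr hv₀ne)
  have hφg : Tendsto (fun i => φ (g (m (σ i)))) atTop (𝓝 0) :=
    (hw φ).comp ((hm.comp hσ).tendsto_atTop)
  have hφv' : Tendsto (fun i => φ ((v (σ i) : X))) atTop (𝓝 ‖(v₀ : X)‖) := by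
    have := (φ.continuous.tendsto _).comp hvc
    rwa [show φ (v₀ : X) = ‖(v₀ : X)‖ from by exact_mod_cast hφv] at this
  have key : ∀ i, φ ((v (σ i) : X)) - ε/3 ≤ φ (g (m (σ i))) := by
    intro i
    have h1 : |φ (g (m (σ i))) - φ ((v (σ i) : X))| ≤ ε/3 := by
      rw [← map_sub]
      calc |φ (g (m (σ i)) - (v (σ i) : X))| ≤ ‖φ‖ * ‖g (m (σ i)) - (v (σ i) : X)‖ :=
            φ.le_opNorm _
      _ ≤ 1 * (ε/3) := by
          apply mul_le_mul (le_of_eq hφ1) (hvlt _).le (norm_nonneg _) zero_le_one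
      _ = ε/3 := one_mul _
    have := abs_le.mp h1
    linarith [this.1]
  have hle : ‖(v₀ : X)‖ - ε/3 ≤ 0 :=
    le_of_tendsto_of_tendsto' (hφv'.sub_const (ε/3)) hφg key
  linarith

end X
section X2
variable {X : Type*} [NormedAddCommGroup X] [NormedSpace ℝ X]

/-- wuC estimate from bounded subset sums. -/
lemma wuc_abs_sum (g : ℕ → X) (M : ℝ)
    (hA : ∀ A : Finset ℕ, ‖∑ j ∈ A, g j‖ ≤ M) (φ : X →L[ℝ] ℝ) (A : Finset ℕ) :
    ∑ j ∈ A, |φ (g j)| ≤ 2 * (‖φ‖ * M) := by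
  classical
  set P := A.filter (fun j => 0 ≤ φ (g j)) with hP
  set N := A.filter (fun j => ¬ 0 ≤ φ (g j)) with hN
  have hsplit : ∑ j ∈ A, |φ (g j)| = ∑ j ∈ P, φ (g j) + ∑ j ∈ N, -(φ (g j)) := by
    rw [hP, hN, ← Finset.sum_filter_add_sum_filter_not A (fun j => 0 ≤ φ (g j))
      (fun j => |φ (g j)|)]
    congr 1
    · exact Finset.sum_congr rfl (fun j hj => abs_of_nonneg (Finset.mem_filter.mp hj).2)
    · exact Finset.sum_congr rfl (fun j hj =>
        abs_of_neg (lt_of_not_ge (Finset.mem_filter.mp hj).2))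
  have h1 : ∑ j ∈ P, φ (g j) ≤ ‖φ‖ * M := by
    calc ∑ j ∈ P, φ (g j) = φ (∑ j ∈ P, g j) := (map_sum φ _ _).symm
    _ ≤ |φ (∑ j ∈ P, g j)| := le_abs_self _
    _ ≤ ‖φ‖ * ‖∑ j ∈ P, g j‖ := φ.le_opNorm _
    _ ≤ ‖φ‖ * M := mul_le_mul_of_nonneg_left (hA P) (norm_nonneg _)
  have h2 : ∑ j ∈ N, -(φ (g j)) ≤ ‖φ‖ * M := by
    calc ∑ j ∈ N, -(φ (g j)) = -(φ (∑ j ∈ N, g j)) := by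
          rw [Finset.sum_neg_distrib, ← map_sum φ _ _]
    _ ≤ |φ (∑ j ∈ N, g j)| := neg_le_abs _
    _ ≤ ‖φ‖ * ‖∑ j ∈ N, g j‖ := φ.le_opNorm _
    _ ≤ ‖φ‖ * M := mul_le_mul_of_nonneg_left (hA N) (norm_nonneg _)
  rw [hsplit]; linarith

lemma wuc_summable (g : ℕ → X) (M : ℝ)
    (hA : ∀ A : Finset ℕ, ‖∑ j ∈ A, g j‖ ≤ M) (φ : X →L[ℝ] ℝ) :
    Summable (fun j => |φ (g j)|) :=
  summable_of_sum_range_le (fun _ => abs_nonneg _)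
    (fun n => wuc_abs_sum g M hA φ (Finset.range n))

/-- The selection lemma: biorthogonal-like system. -/
lemma selection (g : ℕ → X) (x₀ : X) (ε M : ℝ) (hε : 0 < ε)
    (hg : ∀ n, ε ≤ ‖g n‖) (hgM : ∀ n, ‖g n‖ ≤ M)
    (hA : ∀ A : Finset ℕ, ‖∑ j ∈ A, g j‖ ≤ M) :
    ∃ (u : ℕ → ℕ) (ψ : ℕ → X →L[ℝ] ℝ), StrictMono u ∧ ∀ k,
      ‖ψ k‖ ≤ 1 ∧ ψ k x₀ = 0 ∧ (∀ i, i < k → ψ k (g (u i)) = 0) ∧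
      ε/3 ≤ ψ k (g (u k)) ∧ ∀ j, k < j → |ψ k (g (u j))| ≤ ε/100 * (2⁻¹)^j := by
  classical
  have hw : ∀ φ : X →L[ℝ] ℝ, Tendsto (fun n => φ (g n)) atTop (𝓝 0) := by
    intro φ
    have h1 : Tendsto (fun n => |φ (g n)|) atTop (𝓝 0) :=
      (wuc_summable g M hA φ).tendsto_atTop_zero
    exact tendsto_zero_iff_abs_tendsto_zero _ |>.mpr h1
  -- the pick existence
  have ex : ∀ (h : ℕ → ℕ × (X →L[ℝ] ℝ)) (k : ℕ), ∃ y : ℕ × (X →L[ℝ] ℝ),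
      (∀ i, i < k → (h i).1 < y.1) ∧ ‖y.2‖ ≤ 1 ∧ y.2 x₀ = 0 ∧
      (∀ i, i < k → y.2 (g ((h i).1)) = 0) ∧ ε/3 ≤ y.2 (g y.1) ∧
      (∀ i, i < k → |(h i).2 (g y.1)| ≤ ε/100 * (2⁻¹)^k) := by
    intro h k
    set F : Submodule ℝ X :=
      Submodule.span ℝ (insert x₀ ((fun i => g ((h i).1)) '' (Set.Iio k))) with hF
    haveI : FiniteDimensional ℝ F := by
      apply FiniteDimensional.span_of_finite
      exact (Set.Finite.image _ (Set.finite_Iio k)).insert x₀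
    have E1 : ∀ᶠ n in atTop, ε/3 ≤ Metric.infDist (g n) (F : Set X) :=
      eventual_dist g ε M hε hg hgM hw F
    have E2 : ∀ᶠ n in atTop, ∀ i ∈ Finset.range k, |(h i).2 (g n)| ≤ ε/100 * (2⁻¹)^k := by
      rw [eventually_all_finset]
      intro i _
      have hpos : (0:ℝ) < ε/100 * (2⁻¹)^k := by positivity
      have habs : Tendsto (fun n => |(h i).2 (g n)|) atTop (𝓝 0) := by
        simpa using (hw ((h i).2)).abs
      exact habs.eventually_le_const hpos
    have E2' : ∀ᶠ n in atTop, ∀ i, i < k → |(h i).2 (g n)| ≤ ε/100 * (2⁻¹)^k := by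
      filter_upwards [E2] with n hn i hi
      exact hn i (Finset.mem_range.mpr hi)
    have E3 : ∀ᶠ n in atTop, ∀ i ∈ Finset.range k, (h i).1 < n := by
      rw [eventually_all_finset]
      intro i _
      exact eventually_gt_atTop _
    have E3' : ∀ᶠ n in atTop, ∀ i, i < k → (h i).1 < n := by
      filter_upwards [E3] with n hn i hi
      exact hn i (Finset.mem_range.mpr hi)
    obtain ⟨n, h1, h2, h3⟩ := (E1.and (E2'.and E3')).exists
    obtain ⟨φ, hφ1, hφ0, hφn⟩ := hb_off_subspace F (g n) (lt_of_lt_of_le (by positivity) h1)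
    refine ⟨⟨n, φ⟩, h3, hφ1, ?_, ?_, ?_, h2⟩
    · exact hφ0 x₀ (Submodule.subset_span (Set.mem_insert _ _))
    · intro i hi
      exact hφ0 _ (Submodule.subset_span (Set.mem_insert_of_mem _ ⟨i, hi, rfl⟩))
    · rw [hφn]; exact h1
  set d : ℕ × (X →L[ℝ] ℝ) := ⟨0, 0⟩ with hd
  set pick : (ℕ → ℕ × (X →L[ℝ] ℝ)) → ℕ → ℕ × (X →L[ℝ] ℝ) :=
    fun h k => Classical.choose (ex h k) with hpick
  have hspec : ∀ k, (∀ i, i < k → (bchain d pick k i).1 < (bseq d pick k).1) ∧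
      ‖(bseq d pick k).2‖ ≤ 1 ∧ (bseq d pick k).2 x₀ = 0 ∧
      (∀ i, i < k → (bseq d pick k).2 (g ((bchain d pick k i).1)) = 0) ∧
      ε/3 ≤ (bseq d pick k).2 (g (bseq d pick k).1) ∧
      (∀ i, i < k → |(bchain d pick k i).2 (g (bseq d pick k).1)| ≤ ε/100 * (2⁻¹)^k) :=
    fun k => Classical.choose_spec (ex (bchain d pick k) k)
  set u : ℕ → ℕ := fun k => (bseq d pick k).1 with hu
  set ψ : ℕ → X →L[ℝ] ℝ := fun k => (bseq d pick k).2 with hψ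
  have hch : ∀ {m n : ℕ}, n < m → bchain d pick m n = bseq d pick n :=
    fun {m n} h => bchain_eq d pick h
  refine ⟨u, ψ, ?_, ?_⟩
  · apply strictMono_nat_of_lt_succ
    intro k
    have := (hspec (k+1)).1 k (Nat.lt_succ_self k)
    rwa [hch (Nat.lt_succ_self k)] at this
  · intro k
    obtain ⟨-, h1, h2, h3, h4, -⟩ := hspec k
    refine ⟨h1, h2, ?_, h4, ?_⟩
    · intro i hi
      have := h3 i hi
      rwa [hch hi] at this
    · intro j hj
      have := (hspec j).2.2.2.2.2 k hj
      rwa [hch hj] at this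

end X2
section core
variable {X : Type*} [NormedAddCommGroup X] [NormedSpace ℝ X] [CompleteSpace X]

lemma core_claim1 (ε : ℝ) (hε : 0 < ε) (g : ℕ → X) (p : Finset ℕ → X)
    (h3 : ∀ (A : Finset ℕ) (n : ℕ), (∀ a ∈ A, a < n) →
      ‖p (insert n A) - p A - g n‖ ≤ ε * (2⁻¹:ℝ)^n / 256 +
        (if hA : A.Nonempty then ε * (2⁻¹:ℝ)^(A.max' hA) / 256 else ε/256)) :
    ∀ A : Finset ℕ, ‖p A - p ∅ - ∑ j ∈ A, g j‖ ≤ ε/50 := by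
  classical
  set δf : ℕ → ℝ := fun n => ε * (2⁻¹:ℝ)^n / 256 with hδf
  have hδpos : ∀ n, 0 < δf n := fun n => by rw [hδf]; positivity
  have key : ∀ (N : ℕ) (A : Finset ℕ), A.card = N →
      ‖p A - p ∅ - ∑ j ∈ A, g j‖ ≤
        (if A.Nonempty then ε/256 else 0) + 2 * ∑ j ∈ A, δf j -
        (if hA : A.Nonempty then δf (A.max' hA) else 0) := by
    intro N
    induction N with
    | zero =>
      intro A hcard
      have : A = ∅ := Finset.card_eq_zero.mp hcard
      subst this
      simp
    | succ N ih =>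
      intro A hcard
      have hA : A.Nonempty := Finset.card_pos.mp (by omega)
      set m := A.max' hA with hm
      set A' := A.erase m with hA'def
      have hmem : m ∈ A := A.max'_mem hA
      have hins : insert m A' = A := Finset.insert_erase hmem
      have hcard' : A'.card = N := by
        rw [hA'def, Finset.card_erase_of_mem hmem, hcard]; omega
      have hlt : ∀ a ∈ A', a < m := by
        intro a ha
        exact lt_of_le_of_ne (A.le_max' a (Finset.mem_of_mem_erase ha))
          (Finset.ne_of_mem_erase ha)
      have hstep := h3 A' m hlt
      rw [hins] at hstep
      have hsum : ∑ j ∈ A, g j = g m + ∑ j ∈ A', g j := by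
        rw [hA'def, Finset.add_sum_erase A g hmem]
      have hsumδ : ∑ j ∈ A, δf j = δf m + ∑ j ∈ A', δf j := by
        rw [hA'def, Finset.add_sum_erase A δf hmem]
      have hih := ih A' hcard'
      have htri : ‖p A - p ∅ - ∑ j ∈ A, g j‖ ≤
          ‖p A - p A' - g m‖ + ‖p A' - p ∅ - ∑ j ∈ A', g j‖ := by
        rw [hsum]
        have : p A - p ∅ - (g m + ∑ j ∈ A', g j) =
            (p A - p A' - g m) + (p A' - p ∅ - ∑ j ∈ A', g j) := by abel
        rw [this]
        exact norm_add_le _ _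
      rw [if_pos hA, dif_pos hA, ← hm]
      by_cases hA'ne : A'.Nonempty
      · rw [if_pos hA'ne, dif_pos hA'ne] at hih
        have hmax'lt : δf (A'.max' hA'ne) ≤ ∑ j ∈ A', δf j := by
          exact Finset.single_le_sum (fun j _ => (hδpos j).le) (A'.max'_mem hA'ne)
        rw [dif_pos hA'ne] at hstep
        calc ‖p A - p ∅ - ∑ j ∈ A, g j‖ ≤ _ + _ := htri
        _ ≤ (δf m + δf (A'.max' hA'ne)) +
            (ε/256 + 2 * ∑ j ∈ A', δf j - δf (A'.max' hA'ne)) := by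
            exact add_le_add hstep hih
        _ = ε/256 + 2 * (δf m + ∑ j ∈ A', δf j) - δf m := by ring
        _ = ε/256 + 2 * ∑ j ∈ A, δf j - δf m := by rw [hsumδ]
      · rw [if_neg hA'ne, dif_neg hA'ne] at hih
        rw [dif_neg hA'ne] at hstep
        have hA'empty : A' = ∅ := Finset.not_nonempty_iff_eq_empty.mp hA'ne
        have hsumA' : ∑ j ∈ A', δf j = 0 := by rw [hA'empty]; simp
        calc ‖p A - p ∅ - ∑ j ∈ A, g j‖ ≤ _ + _ := htri
        _ ≤ (δf m + ε/256) + (0 + 2 * ∑ j ∈ A', δf j - 0) := add_le_add hstep hih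
        _ = ε/256 + 2 * (δf m + ∑ j ∈ A', δf j) - δf m := by rw [hsumA']; ring
        _ = ε/256 + 2 * ∑ j ∈ A, δf j - δf m := by rw [hsumδ]
  intro A
  have h := key A.card A rfl
  have hsumle : ∑ j ∈ A, δf j ≤ ε/128 := by
    have hsummable : Summable δf := by
      rw [hδf]
      have := ((summable_geometric_of_lt_one (by norm_num : (0:ℝ) ≤ 2⁻¹)
          (by norm_num : (2⁻¹:ℝ) < 1)).mul_left (ε/256))
      apply this.congr
      intro n; ring
    have h1 : ∑ j ∈ A, δf j ≤ ∑' j, δf j :=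
      Summable.sum_le_tsum A (fun j _ => (hδpos j).le) hsummable
    have h2 : ∑' j, δf j = ε/128 := by
      rw [hδf]
      rw [show (fun n => ε * (2⁻¹:ℝ)^n / 256) = (fun n => (ε/256) * (2⁻¹:ℝ)^n) from
        funext (fun n => by ring)]
      rw [tsum_mul_left, tsum_geometric_of_lt_one (by norm_num) (by norm_num)]
      norm_num; ring
    linarith
  have hub : (if A.Nonempty then ε/256 else 0) + 2 * ∑ j ∈ A, δf j -
      (if hA : A.Nonempty then δf (A.max' hA) else 0) ≤ ε/50 := by
    have h0 : (if A.Nonempty then ε/256 else 0) ≤ ε/256 := by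
      split <;> [exact le_refl _; positivity]
    have h1 : (0:ℝ) ≤ (if hA : A.Nonempty then δf (A.max' hA) else 0) := by
      split <;> [exact (hδpos _).le; exact le_refl _]
    linarith
  linarith

end core
section core2
variable {X : Type*} [NormedAddCommGroup X] [NormedSpace ℝ X] [CompleteSpace X]

lemma core_chain (ε : ℝ) (hε : 0 < ε) (g : ℕ → X) (p : Finset ℕ → X)
    (h3 : ∀ (A : Finset ℕ) (n : ℕ), (∀ a ∈ A, a < n) →
      ‖p (insert n A) - p A - g n‖ ≤ ε * (2⁻¹:ℝ)^n / 256 +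
        (if hA : A.Nonempty then ε * (2⁻¹:ℝ)^(A.max' hA) / 256 else ε/256))
    (w : ℕ → ℕ) (hw : StrictMono w) :
    ∃ eL : X, ‖eL‖ ≤ ε/50 ∧
      Tendsto (fun m => p (Finset.image w (Finset.range (m+1))) - p ∅ -
        ∑ i ∈ Finset.range (m+1), g (w i)) atTop (𝓝 eL) := by
  classical
  set δf : ℕ → ℝ := fun n => ε * (2⁻¹:ℝ)^n / 256 with hδf
  set A : ℕ → Finset ℕ := fun m => Finset.image w (Finset.range (m+1)) with hAdef
  set e : ℕ → X := fun m => p (A m) - p ∅ - ∑ i ∈ Finset.range (m+1), g (w i) with hedef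
  have hsum_image : ∀ m, ∑ j ∈ A m, g j = ∑ i ∈ Finset.range (m+1), g (w i) := by
    intro m
    rw [hAdef]
    exact Finset.sum_image (fun a _ b _ hab => hw.injective hab)
  have hbnd : ∀ m, ‖e m‖ ≤ ε/50 := by
    intro m
    show ‖p (A m) - p ∅ - ∑ i ∈ Finset.range (m+1), g (w i)‖ ≤ ε/50
    rw [← hsum_image m]
    exact core_claim1 ε hε g p h3 (A m)
  have hAm_mem : ∀ m, w m ∈ A m := fun m =>
    Finset.mem_image.mpr ⟨m, Finset.mem_range.mpr (Nat.lt_succ_self m), rfl⟩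
  have hAm_ne : ∀ m, (A m).Nonempty := fun m => ⟨w m, hAm_mem m⟩
  have hAmax : ∀ m, (A m).max' (hAm_ne m) = w m := by
    intro m
    apply le_antisymm
    · apply Finset.max'_le
      intro y hy
      obtain ⟨i, hi, rfl⟩ := Finset.mem_image.mp hy
      exact hw.monotone (Nat.lt_succ_iff.mp (Finset.mem_range.mp hi))
    · exact Finset.le_max' _ _ (hAm_mem m)
  have hAsucc : ∀ m, A (m+1) = insert (w (m+1)) (A m) := by
    intro m
    rw [hAdef]
    simp only [Finset.range_add_one (n := m+1), Finset.image_insert]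
  have hstep : ∀ m, ‖e (m+1) - e m‖ ≤ δf (m+1) + δf m := by
    intro m
    have hlt : ∀ a ∈ A m, a < w (m+1) := by
      intro a ha
      obtain ⟨i, hi, rfl⟩ := Finset.mem_image.mp ha
      exact hw (Finset.mem_range.mp hi)
    have h := h3 (A m) (w (m+1)) hlt
    rw [← hAsucc m, dif_pos (hAm_ne m), hAmax m] at h
    have heq : e (m+1) - e m = p (A (m+1)) - p (A m) - g (w (m+1)) := by
      rw [hedef]
      simp only [Finset.sum_range_succ (n := m+1)]
      abel
    rw [heq]
    refine h.trans ?_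
    have h1 : ε * (2⁻¹:ℝ)^(w (m+1)) / 256 ≤ δf (m+1) := by
      have hp : (2⁻¹:ℝ)^(w (m+1)) ≤ (2⁻¹:ℝ)^(m+1) :=
        pow_le_pow_of_le_one (by norm_num) (by norm_num) (hw.le_apply)
      have := mul_le_mul_of_nonneg_left hp hε.le
      simp only [hδf]
      linarith
    have h2 : ε * (2⁻¹:ℝ)^(w m) / 256 ≤ δf m := by
      have hp : (2⁻¹:ℝ)^(w m) ≤ (2⁻¹:ℝ)^m :=
        pow_le_pow_of_le_one (by norm_num) (by norm_num) (hw.le_apply)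
      have := mul_le_mul_of_nonneg_left hp hε.le
      simp only [hδf]
      linarith
    linarith
  have hsummable : Summable (fun m => δf (m+1) + δf m) := by
    have hs : Summable δf := by
      have := ((summable_geometric_of_lt_one (by norm_num : (0:ℝ) ≤ 2⁻¹)
          (by norm_num : (2⁻¹:ℝ) < 1)).mul_left (ε/256))
      apply this.congr; intro n; rw [hδf]; ring
    exact ((hs.comp_injective (add_left_injective 1)).add hs).congr (fun m => by simp)
  have hcauchy : CauchySeq e := by
    apply cauchySeq_of_dist_le_of_summable (fun m => δf (m+1) + δf m) _ hsummable
    intro m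
    rw [dist_eq_norm, norm_sub_rev]
    exact hstep m
  obtain ⟨eL, heL⟩ := cauchySeq_tendsto_of_complete hcauchy
  exact ⟨eL, le_of_tendsto' heL.norm hbnd, heL⟩

end core2
section branchA
variable {X : Type*} [NormedAddCommGroup X] [NormedSpace ℝ X] [CompleteSpace X]

lemma c0_coord_le_norm (a : C₀(ℕ, ℝ)) (j : ℕ) : |a j| ≤ ‖a‖ := by
  have h1 : ‖a.toBCF j‖ ≤ ‖a.toBCF‖ := a.toBCF.norm_coe_le_norm j
  rwa [ZeroAtInftyContinuousMap.norm_toBCF_eq_norm, Real.norm_eq_abs] at h1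

lemma c0_norm_le (a : C₀(ℕ, ℝ)) (c : ℝ) (hc : 0 ≤ c) (h : ∀ j, |a j| ≤ c) : ‖a‖ ≤ c := by
  rw [← ZeroAtInftyContinuousMap.norm_toBCF_eq_norm]
  exact (BoundedContinuousFunction.norm_le hc).mpr (fun j => by
    rw [Real.norm_eq_abs]; exact h j)

lemma c0_tendsto (a : C₀(ℕ, ℝ)) : Tendsto (fun j => a j) atTop (𝓝 0) := by
  have := zero_at_infty (α := ℕ) (β := ℝ) a
  rwa [cocompact_eq_cofinite, Nat.cofinite_eq_atTop] at this

lemma branchA (ε M : ℝ) (hε : 0 < ε) (hM : 0 ≤ M) (v : ℕ → X)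
    (hvsum : ∀ (φ : X →L[ℝ] ℝ) (A : Finset ℕ), ∑ j ∈ A, |φ (v j)| ≤ 2 * (‖φ‖ * M))
    (ψ : ℕ → X →L[ℝ] ℝ)
    (hψ : ∀ k, ‖ψ k‖ ≤ 1 ∧ (∀ i, i < k → ψ k (v i) = 0) ∧ ε/3 ≤ ψ k (v k) ∧
      ∀ j, k < j → |ψ k (v j)| ≤ ε/100 * (2⁻¹)^j) :
    ¬ NoC0 X := by
  classical
  intro hno
  apply hno
  -- key finite-sum bound
  have SB : ∀ (A : Finset ℕ) (a : ℕ → ℝ) (c : ℝ), 0 ≤ c → (∀ j ∈ A, |a j| ≤ c) →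
      ‖∑ j ∈ A, a j • v j‖ ≤ 2 * M * c := by
    intro A a c hc hac
    rcases eq_or_ne (∑ j ∈ A, a j • v j) 0 with h0 | h0
    · rw [h0, norm_zero]; positivity
    obtain ⟨φ, hφ1, hφeq⟩ := exists_dual_vector ℝ _ (norm_ne_zero_iff.mpr h0)
    have : ‖∑ j ∈ A, a j • v j‖ = φ (∑ j ∈ A, a j • v j) := by exact_mod_cast hφeq.symm
    rw [this, map_sum]
    calc ∑ j ∈ A, φ (a j • v j) = ∑ j ∈ A, a j * φ (v j) := by
          refine Finset.sum_congr rfl (fun j _ => ?_)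
          rw [map_smul, smul_eq_mul]
    _ ≤ ∑ j ∈ A, |a j * φ (v j)| := Finset.sum_le_sum (fun j _ => le_abs_self _)
    _ = ∑ j ∈ A, |a j| * |φ (v j)| := by
          refine Finset.sum_congr rfl (fun j _ => abs_mul _ _)
    _ ≤ ∑ j ∈ A, c * |φ (v j)| := by
          refine Finset.sum_le_sum (fun j hj => ?_)
          exact mul_le_mul_of_nonneg_right (hac j hj) (abs_nonneg _)
    _ = c * ∑ j ∈ A, |φ (v j)| := by rw [Finset.mul_sum]
    _ ≤ c * (2 * (‖φ‖ * M)) := mul_le_mul_of_nonneg_left (hvsum φ A) hc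
    _ = 2 * M * c * ‖φ‖ := by ring
    _ = 2 * M * c := by rw [hφ1, mul_one]
  -- summability
  have hsum : ∀ a : C₀(ℕ, ℝ), Summable (fun j => a j • v j) := by
    intro a
    rw [summable_iff_vanishing]
    intro e he
    obtain ⟨r, hr, hball⟩ := Metric.mem_nhds_iff.mp he
    set c := r / (2 * (M + 1)) with hcdef
    have hc : 0 < c := by positivity
    have hev : ∀ᶠ j in atTop, |a j| ≤ c := by
      have := (c0_tendsto a).abs
      simp only [abs_zero] at this
      exact this.eventually_le_const hc
    obtain ⟨N, hN⟩ := eventually_atTop.mp hev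
    refine ⟨Finset.range N, fun t ht => ?_⟩
    apply hball
    rw [Metric.mem_ball, dist_zero_right]
    have hb := SB t (fun j => a j) c hc.le (fun j hj => by
      apply hN
      by_contra hjN
      push_neg at hjN
      exact (Finset.disjoint_left.mp ht hj) (Finset.mem_range.mpr hjN))
    calc ‖∑ j ∈ t, a j • v j‖ ≤ 2 * M * c := hb
    _ = r * (M / (M+1)) := by rw [hcdef]; field_simp
    _ < r * 1 := by
        apply mul_lt_mul_of_pos_left _ hr
        rw [div_lt_one (by linarith)]; linarith
    _ = r := mul_one r
  -- the operator
  have hbdd : ∀ a : C₀(ℕ, ℝ), ‖∑' j, a j • v j‖ ≤ 2 * M * ‖a‖ := by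
    intro a
    have hs := (hsum a).hasSum
    apply le_of_tendsto' hs.norm
    intro s
    exact SB s (fun j => a j) ‖a‖ (norm_nonneg a) (fun j _ => c0_coord_le_norm a j)
  let T₀ : C₀(ℕ, ℝ) →ₗ[ℝ] X := {
    toFun := fun a => ∑' j, a j • v j
    map_add' := fun a b => by
      show (∑' j, (a + b) j • v j) = _
      rw [show (fun j => ((a + b) j) • v j) = fun j => a j • v j + b j • v j from
        funext (fun j => by rw [ZeroAtInftyContinuousMap.add_apply, add_smul])]
      exact (hsum a).tsum_add (hsum b)
    map_smul' := fun r a => by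
      show (∑' j, (r • a) j • v j) = r • ∑' j, a j • v j
      rw [show (fun j => ((r • a) j) • v j) = fun j => r • (a j • v j) from
        funext (fun j => by rw [ZeroAtInftyContinuousMap.smul_apply, smul_smul, smul_eq_mul])]
      exact (hsum a).tsum_const_smul r }
  let T : C₀(ℕ, ℝ) →L[ℝ] X := T₀.mkContinuous (2 * M + 1) (fun a => by
    calc ‖T₀ a‖ = ‖∑' j, a j • v j‖ := rfl
    _ ≤ 2 * M * ‖a‖ := hbdd a
    _ ≤ (2 * M + 1) * ‖a‖ := by
        apply mul_le_mul_of_nonneg_right _ (norm_nonneg a); linarith)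
  refine ⟨T, ε/4, by positivity, ?_⟩
  intro a
  rcases eq_or_ne a 0 with rfl | ha
  · simp
  have hc : 0 < ‖a‖ := norm_pos_iff.mpr ha
  -- find the max coordinate
  have hev : ∀ᶠ j in atTop, |a j| < ‖a‖/2 := by
    have := (c0_tendsto a).abs
    simp only [abs_zero] at this
    exact this.eventually_lt_const (by linarith)
  obtain ⟨N, hN⟩ := eventually_atTop.mp hev
  have hj₀ : ∃ j₀, ‖a‖/2 < |a j₀| := by
    by_contra hcon
    push_neg at hcon
    have := c0_norm_le a (‖a‖/2) (by linarith) hcon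
    linarith
  obtain ⟨j₀, hj₀⟩ := hj₀
  have hj₀N : j₀ < N := by
    by_contra hcon
    push_neg at hcon
    have := hN j₀ hcon
    linarith
  obtain ⟨k, hkmem, hkmax⟩ := Finset.exists_max_image (Finset.range N) (fun j => |a j|)
    ⟨j₀, Finset.mem_range.mpr hj₀N⟩
  have hkmax' : ∀ j, |a j| ≤ |a k| := by
    intro j
    by_cases hjN : j < N
    · exact hkmax j (Finset.mem_range.mpr hjN)
    · push_neg at hjN
      have h1 := hN j hjN
      have h2 := hkmax j₀ (Finset.mem_range.mpr hj₀N)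
      linarith
  have hak : |a k| = ‖a‖ :=
    le_antisymm (c0_coord_le_norm a k) (c0_norm_le a |a k| (abs_nonneg _) hkmax')
  obtain ⟨hψn, hψlt, hψk, hψgt⟩ := hψ k
  -- compute ψ k (T a)
  have hmap : ψ k (T a) = ∑' j, a j * ψ k (v j) := by
    have : T a = ∑' j, a j • v j := rfl
    rw [this, (ψ k).map_tsum (hsum a)]
    congr 1
    funext j
    rw [map_smul, smul_eq_mul]
  have hbsum : Summable (fun j => a j * ψ k (v j)) := by
    have := ((hsum a).map (ψ k) (ψ k).continuous)
    apply this.congr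
    intro j
    simp [smul_eq_mul]
  have hsplit : ∑' j, a j * ψ k (v j) =
      a k * ψ k (v k) + ∑' j, ite (j = k) 0 (a j * ψ k (v j)) :=
    hbsum.tsum_eq_add_tsum_ite k
  -- bound the tail
  have hdom : ∀ j, |ite (j = k) 0 (a j * ψ k (v j))| ≤ ‖a‖ * (ε/100) * (2⁻¹)^j := by
    intro j
    rcases eq_or_ne j k with rfl | hjk
    · simp; positivity
    rw [if_neg hjk, abs_mul]
    rcases lt_trichotomy j k with hlt | heq | hgt
    · rw [hψlt j hlt, abs_zero, mul_zero]; positivity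
    · exact absurd heq hjk
    · calc |a j| * |ψ k (v j)| ≤ ‖a‖ * (ε/100 * (2⁻¹)^j) := by
            apply mul_le_mul (c0_coord_le_norm a j) (hψgt j hgt) (abs_nonneg _) (norm_nonneg a)
      _ = ‖a‖ * (ε/100) * (2⁻¹)^j := by ring
  have hdomsum : Summable (fun j => ‖a‖ * (ε/100) * (2⁻¹:ℝ)^j) :=
    (summable_geometric_of_lt_one (by norm_num) (by norm_num)).mul_left _
  have htailsum : Summable (fun j => |ite (j = k) 0 (a j * ψ k (v j))|) :=
    Summable.of_nonneg_of_le (fun j => abs_nonneg _) hdom hdomsum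
  have htail : |∑' j, ite (j = k) 0 (a j * ψ k (v j))| ≤ ‖a‖ * (ε/50) := by
    calc |∑' j, ite (j = k) 0 (a j * ψ k (v j))| ≤
        ∑' j, |ite (j = k) 0 (a j * ψ k (v j))| := by
          simpa [Real.norm_eq_abs] using
            norm_tsum_le_tsum_norm (f := fun j => ite (j = k) 0 (a j * ψ k (v j)))
              (by simpa [Real.norm_eq_abs] using htailsum)
    _ ≤ ∑' j, ‖a‖ * (ε/100) * (2⁻¹:ℝ)^j := Summable.tsum_le_tsum hdom htailsum hdomsum
    _ = ‖a‖ * (ε/100) * 2 := by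
        rw [tsum_mul_left, tsum_geometric_of_lt_one (by norm_num) (by norm_num)]
        norm_num
    _ = ‖a‖ * (ε/50) := by ring
  -- final estimate
  have hakψ : ‖a‖ * (ε/3) ≤ |a k * ψ k (v k)| := by
    rw [abs_mul, hak]
    apply mul_le_mul_of_nonneg_left _ (norm_nonneg a)
    rw [abs_of_nonneg (le_trans (by positivity) hψk)]
    exact hψk
  have hlow : ‖a‖ * (ε/3) - ‖a‖ * (ε/50) ≤ |ψ k (T a)| := by
    rw [hmap, hsplit]
    have h1 := abs_sub_abs_le_abs_sub (a k * ψ k (v k))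
      (-(∑' j, ite (j = k) 0 (a j * ψ k (v j))))
    have h2 : |a k * ψ k (v k) - -(∑' j, ite (j = k) 0 (a j * ψ k (v j)))| =
        |a k * ψ k (v k) + ∑' j, ite (j = k) 0 (a j * ψ k (v j))| := by
      rw [sub_neg_eq_add]
    rw [h2, abs_neg] at h1
    have := hakψ
    have := htail
    linarith
  have hup : |ψ k (T a)| ≤ ‖T a‖ := by
    calc |ψ k (T a)| ≤ ‖ψ k‖ * ‖T a‖ := (ψ k).le_opNorm _
    _ ≤ 1 * ‖T a‖ := mul_le_mul_of_nonneg_right hψn (norm_nonneg _)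
    _ = ‖T a‖ := one_mul _
  have : ‖a‖ * (ε/3) - ‖a‖ * (ε/50) = ‖a‖ * (ε/3 - ε/50) := by ring
  calc ε/4 * ‖a‖ ≤ ‖a‖ * (ε/3) - ‖a‖ * (ε/50) := by nlinarith [norm_nonneg a]
  _ ≤ |ψ k (T a)| := hlow
  _ ≤ ‖T a‖ := hup

end branchA
section branchB
variable {X : Type*} [NormedAddCommGroup X] [NormedSpace ℝ X] [CompleteSpace X]

lemma branchB (ε : ℝ) (hε : 0 < ε) (g : ℕ → X) (p : Finset ℕ → X)
    (h3 : ∀ (A : Finset ℕ) (n : ℕ), (∀ a ∈ A, a < n) →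
      ‖p (insert n A) - p A - g n‖ ≤ ε * (2⁻¹:ℝ)^n / 256 +
        (if hA : A.Nonempty then ε * (2⁻¹:ℝ)^(A.max' hA) / 256 else ε/256))
    (hsumabs : ∀ φ : X →L[ℝ] ℝ, Summable (fun j => |φ (g j)|))
    (u : ℕ → ℕ) (hu : StrictMono u) (ψ : ℕ → X →L[ℝ] ℝ)
    (hψ : ∀ k, ‖ψ k‖ ≤ 1 ∧ ψ k (p ∅) = 0 ∧ (∀ i, i < k → ψ k (g (u i)) = 0) ∧
      ε/3 ≤ ψ k (g (u k)) ∧ ∀ j, k < j → |ψ k (g (u j))| ≤ ε/100 * (2⁻¹)^j)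
    (Mset : Set X) (hmem : ∀ A, p A ∈ Mset) (hrwsc : RelWeakSeqComplete Mset) : False := by
  classical
  -- for each set of naturals, an infinite set of selection indices
  set Ps : Set ℕ → (ℕ → Prop) := fun s => fun n => n % 2 = 0 ∨ (n % 2 = 1 ∧ (n-1)/2 ∈ s)
    with hPs
  have hPsInf : ∀ s, (setOf (Ps s)).Infinite := by
    intro s
    exact Set.infinite_of_injective_forall_mem (f := fun k : ℕ => 2 * k)
      (fun a b hab => by
        have h2 : 2*a = 2*b := hab
        omega)
      (fun k => Or.inl (show 2*k % 2 = 0 by omega))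
  have hPsmem : ∀ s mm, Ps s (2*mm+1) ↔ mm ∈ s := by
    intro s mm
    constructor
    · rintro (h | ⟨h1, h2⟩)
      · omega
      · have : (2*mm+1-1)/2 = mm := by omega
        rwa [this] at h2
    · intro h; right; exact ⟨by omega, by
        have : (2*mm+1-1)/2 = mm := by omega
        rwa [this]⟩
  -- the chain for a set s
  set w : Set ℕ → ℕ → ℕ := fun s i => u (Nat.nth (Ps s) i) with hw
  have hwmono : ∀ s, StrictMono (w s) := fun s =>
    hu.comp (Nat.nth_strictMono (hPsInf s))
  set xs : Set ℕ → ℕ → X := fun s m => p (Finset.image (w s) (Finset.range (m+1))) with hxs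
  -- the chain limits
  have hchain := fun s => core_chain ε hε g p h3 (w s) (hwmono s)
  -- weak Cauchy
  have hsummb : ∀ (φ : X →L[ℝ] ℝ) (s : Set ℕ), Summable (fun i => φ (g (w s i))) := by
    intro φ s
    have h1 : Summable ((fun j => |φ (g j)|) ∘ (w s)) :=
      (hsumabs φ).comp_injective (hwmono s).injective
    exact (Summable.of_abs h1)
  have hweak : ∀ s : Set ℕ, ∃ a : X, ∀ φ : X →L[ℝ] ℝ,
      Tendsto (fun m => φ (xs s m)) atTop (𝓝 (φ a)) := by
    intro s
    apply hrwsc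
    · intro m; exact hmem _
    · intro φ
      obtain ⟨eL, heLb, heL⟩ := hchain s
      refine ⟨φ (p ∅) + (∑' i, φ (g (w s i))) + φ eL, ?_⟩
      have hdecomp : ∀ m, φ (xs s m) = φ (p ∅) +
          (∑ i ∈ Finset.range (m+1), φ (g (w s i))) +
          φ (p (Finset.image (w s) (Finset.range (m+1))) - p ∅ -
            ∑ i ∈ Finset.range (m+1), g (w s i)) := by
        intro m
        rw [← map_sum, ← map_add, ← map_add]
        congr 1
        rw [hxs]
        abel
      rw [show (fun m => φ (xs s m)) = fun m => φ (p ∅) +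
          (∑ i ∈ Finset.range (m+1), φ (g (w s i))) +
          φ (p (Finset.image (w s) (Finset.range (m+1))) - p ∅ -
            ∑ i ∈ Finset.range (m+1), g (w s i)) from funext hdecomp]
      apply Tendsto.add
      apply Tendsto.add tendsto_const_nhds
      · have h1 := (hsummb φ s).hasSum.tendsto_sum_nat
        exact h1.comp (tendsto_add_atTop_nat 1)
      · exact (φ.continuous.tendsto eL).comp heL
  choose aa haa using hweak
  -- value estimates
  have hval : ∀ (s : Set ℕ) (φ : X →L[ℝ] ℝ), ∃ eL : X, ‖eL‖ ≤ ε/50 ∧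
      φ (aa s) = φ (p ∅) + (∑' i, φ (g (w s i))) + φ eL := by
    intro s φ
    obtain ⟨eL, heLb, heL⟩ := hchain s
    refine ⟨eL, heLb, ?_⟩
    have h1 : Tendsto (fun m => φ (xs s m)) atTop (𝓝 (φ (aa s))) := haa s φ
    have h2 : Tendsto (fun m => φ (xs s m)) atTop
        (𝓝 (φ (p ∅) + (∑' i, φ (g (w s i))) + φ eL)) := by
      have hdecomp : ∀ m, φ (xs s m) = φ (p ∅) +
          (∑ i ∈ Finset.range (m+1), φ (g (w s i))) +
          φ (p (Finset.image (w s) (Finset.range (m+1))) - p ∅ -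
            ∑ i ∈ Finset.range (m+1), g (w s i)) := by
        intro m
        rw [← map_sum, ← map_add, ← map_add]
        congr 1
        rw [hxs]
        abel
      rw [show (fun m => φ (xs s m)) = fun m => φ (p ∅) +
          (∑ i ∈ Finset.range (m+1), φ (g (w s i))) +
          φ (p (Finset.image (w s) (Finset.range (m+1))) - p ∅ -
            ∑ i ∈ Finset.range (m+1), g (w s i)) from funext hdecomp]
      apply Tendsto.add
      apply Tendsto.add tendsto_const_nhds
      · exact (hsummb φ s).hasSum.tendsto_sum_nat.comp (tendsto_add_atTop_nat 1)
      · exact (φ.continuous.tendsto eL).comp heL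
    exact tendsto_nhds_unique h1 h2
  -- geometric tail bound
  have hgeo : ∀ s : Set ℕ, (∑' i, ε/100 * (2⁻¹:ℝ)^(Nat.nth (Ps s) i)) ≤ ε/50 := by
    intro s
    have hsummg : Summable (fun j => ε/100 * (2⁻¹:ℝ)^j) :=
      (summable_geometric_of_lt_one (by norm_num) (by norm_num)).mul_left _
    have h1 := tsum_comp_le_tsum_of_inj hsummg (fun j => by positivity)
      (Nat.nth_injective (hPsInf s))
    refine h1.trans ?_
    rw [tsum_mul_left, tsum_geometric_of_lt_one (by norm_num) (by norm_num)]
    norm_num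
    linarith
  have hsummg2 : ∀ s, Summable (fun i => ε/100 * (2⁻¹:ℝ)^(Nat.nth (Ps s) i)) := by
    intro s
    exact ((summable_geometric_of_lt_one (by norm_num) (by norm_num)).mul_left
      (ε/100)).comp_injective (Nat.nth_injective (hPsInf s))
  -- estimate for k in the set
  have hin : ∀ (s : Set ℕ) (k : ℕ), Ps s k → ε/3 - ε/25 ≤ ψ k (aa s) := by
    intro s k hk
    obtain ⟨eL, heLb, hvl⟩ := hval s (ψ k)
    obtain ⟨hn1, hn0, hzero, hbig, htail⟩ := hψ k
    have hkrange : k ∈ Set.range (Nat.nth (Ps s)) := by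
      rw [Nat.range_nth_of_infinite (hPsInf s)]
      exact hk
    obtain ⟨i₀, hi₀⟩ := hkrange
    have hb : Summable (fun i => ψ k (g (w s i))) := hsummb _ s
    have hsplit := hb.tsum_eq_add_tsum_ite i₀
    have hterm : ∀ i, |ite (i = i₀) 0 (ψ k (g (w s i)))| ≤ ε/100 * (2⁻¹:ℝ)^(Nat.nth (Ps s) i) := by
      intro i
      rcases eq_or_ne i i₀ with rfl | hne
      · simp; positivity
      rw [if_neg hne]
      have hnthne : Nat.nth (Ps s) i ≠ k := by
        rw [← hi₀]
        exact fun hcon => hne ((Nat.nth_injective (hPsInf s)) hcon)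
      rcases lt_or_gt_of_ne hnthne with hlt | hgt
      · rw [hw]
        simp only
        rw [hzero _ hlt, abs_zero]
        positivity
      · exact htail _ hgt
    have htsum_ite : Summable (fun i => |ite (i = i₀) 0 (ψ k (g (w s i)))|) := by
      apply Summable.of_nonneg_of_le (fun i => abs_nonneg _) hterm (hsummg2 s)
    have htail2 : |∑' i, ite (i = i₀) 0 (ψ k (g (w s i)))| ≤ ε/50 := by
      calc |∑' i, ite (i = i₀) 0 (ψ k (g (w s i)))| ≤
          ∑' i, |ite (i = i₀) 0 (ψ k (g (w s i)))| := by
            simpa [Real.norm_eq_abs] using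
              norm_tsum_le_tsum_norm (f := fun i => ite (i = i₀) 0 (ψ k (g (w s i))))
                (by simpa [Real.norm_eq_abs] using htsum_ite)
      _ ≤ ∑' i, ε/100 * (2⁻¹:ℝ)^(Nat.nth (Ps s) i) := Summable.tsum_le_tsum hterm htsum_ite (hsummg2 s)
      _ ≤ ε/50 := hgeo s
    have heL2 : |ψ k eL| ≤ ε/50 := by
      calc |ψ k eL| ≤ ‖ψ k‖ * ‖eL‖ := (ψ k).le_opNorm _
      _ ≤ 1 * (ε/50) := mul_le_mul hn1 heLb (norm_nonneg _) zero_le_one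
      _ = ε/50 := one_mul _
    have hb0 : ψ k (g (w s i₀)) = ψ k (g (u k)) := by rw [hw]; simp only [hi₀]
    rw [hvl, hn0, hsplit, hb0]
    have h1 := abs_le.mp htail2
    have h2 := abs_le.mp heL2
    linarith [hbig]
  -- estimate for k not in the set
  have hout : ∀ (s : Set ℕ) (k : ℕ), ¬ Ps s k → |ψ k (aa s)| ≤ ε/25 := by
    intro s k hk
    obtain ⟨eL, heLb, hvl⟩ := hval s (ψ k)
    obtain ⟨hn1, hn0, hzero, hbig, htail⟩ := hψ k
    have hterm : ∀ i, |ψ k (g (w s i))| ≤ ε/100 * (2⁻¹:ℝ)^(Nat.nth (Ps s) i) := by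
      intro i
      have hnthne : Nat.nth (Ps s) i ≠ k := by
        intro hcon
        apply hk
        rw [← hcon]
        exact Nat.nth_mem_of_infinite (hPsInf s) i
      rcases lt_or_gt_of_ne hnthne with hlt | hgt
      · rw [hw]; simp only; rw [hzero _ hlt, abs_zero]; positivity
      · exact htail _ hgt
    have htsum_ite : Summable (fun i => |ψ k (g (w s i))|) :=
      Summable.of_nonneg_of_le (fun i => abs_nonneg _) hterm (hsummg2 s)
    have htail2 : |∑' i, ψ k (g (w s i))| ≤ ε/50 := by
      calc |∑' i, ψ k (g (w s i))| ≤ ∑' i, |ψ k (g (w s i))| := by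
            simpa [Real.norm_eq_abs] using
              norm_tsum_le_tsum_norm (f := fun i => ψ k (g (w s i)))
                (by simpa [Real.norm_eq_abs] using htsum_ite)
      _ ≤ ∑' i, ε/100 * (2⁻¹:ℝ)^(Nat.nth (Ps s) i) := Summable.tsum_le_tsum hterm htsum_ite (hsummg2 s)
      _ ≤ ε/50 := hgeo s
    have heL2 : |ψ k eL| ≤ ε/50 := by
      calc |ψ k eL| ≤ ‖ψ k‖ * ‖eL‖ := (ψ k).le_opNorm _
      _ ≤ 1 * (ε/50) := mul_le_mul hn1 heLb (norm_nonneg _) zero_le_one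
      _ = ε/50 := one_mul _
    rw [hvl, hn0]
    have h1 := abs_le.mp htail2
    have h2 := abs_le.mp heL2
    rw [zero_add]
    calc |(∑' i, ψ k (g (w s i))) + ψ k eL| ≤
        |∑' i, ψ k (g (w s i))| + |ψ k eL| := abs_add_le _ _
    _ ≤ ε/50 + ε/50 := add_le_add htail2 heL2
    _ = ε/25 := by ring
  -- separation
  have hsep : ∀ s s' : Set ℕ, s ≠ s' → ε/5 ≤ ‖aa s - aa s'‖ := by
    intro s s' hne
    have hksplit : ∃ k, (Ps s k ∧ ¬ Ps s' k) ∨ (Ps s' k ∧ ¬ Ps s k) := by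
      have : ∃ mm, (mm ∈ s ∧ mm ∉ s') ∨ (mm ∈ s' ∧ mm ∉ s) := by
        by_contra hcon
        push_neg at hcon
        apply hne
        ext mm
        have := hcon mm
        tauto
      obtain ⟨mm, hmm⟩ := this
      refine ⟨2*mm+1, ?_⟩
      rcases hmm with ⟨h1, h2⟩ | ⟨h1, h2⟩
      · left; exact ⟨(hPsmem s mm).mpr h1, fun hc => h2 ((hPsmem s' mm).mp hc)⟩
      · right; exact ⟨(hPsmem s' mm).mpr h1, fun hc => h2 ((hPsmem s mm).mp hc)⟩
    obtain ⟨k, hk⟩ := hksplit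
    have hmain : ε/5 ≤ |ψ k (aa s) - ψ k (aa s')| := by
      rcases hk with ⟨hin1, hout1⟩ | ⟨hin1, hout1⟩
      · have h1 := hin s k hin1
        have h2 := abs_le.mp (hout s' k hout1)
        have h3 : ε/5 ≤ ψ k (aa s) - ψ k (aa s') := by linarith
        exact h3.trans (le_abs_self _)
      · have h1 := hin s' k hin1
        have h2 := abs_le.mp (hout s k hout1)
        have h3 : ε/5 ≤ ψ k (aa s') - ψ k (aa s) := by linarith
        rw [abs_sub_comm]
        exact h3.trans (le_abs_self _)
    have hψk := (hψ k).1
    calc ε/5 ≤ |ψ k (aa s) - ψ k (aa s')| := hmain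
    _ = |ψ k (aa s - aa s')| := by rw [← map_sub]
    _ ≤ ‖ψ k‖ * ‖aa s - aa s'‖ := (ψ k).le_opNorm _
    _ ≤ 1 * ‖aa s - aa s'‖ := mul_le_mul_of_nonneg_right hψk (norm_nonneg _)
    _ = ‖aa s - aa s'‖ := one_mul _
  -- separability contradiction
  have hmemY : ∀ s, aa s ∈ closure ((Submodule.span ℝ (Set.range p) : Submodule ℝ X) : Set X) := by
    intro s
    by_contra hcon
    obtain ⟨φ, uu, hlt, hgt⟩ := geometric_hahn_banach_closed_point
      ((Submodule.span ℝ (Set.range p)).convex.closure) isClosed_closure hcon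
    have hle : φ (aa s) ≤ uu := by
      apply le_of_tendsto (haa s φ)
      apply Eventually.of_forall
      intro m
      apply le_of_lt
      apply hlt
      apply subset_closure
      exact Submodule.subset_span ⟨_, rfl⟩
    linarith
  have hsepY : TopologicalSpace.IsSeparable
      (closure ((Submodule.span ℝ (Set.range p) : Submodule ℝ X) : Set X)) :=
    ((Set.countable_range p).isSeparable.span).closure
  obtain ⟨c, hccount, hcsub⟩ := hsepY
  have hnear : ∀ s : Set ℕ, ∃ d ∈ c, dist (aa s) d < ε/15 := by
    intro s
    have := hcsub (hmemY s)
    rw [Metric.mem_closure_iff] at this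
    exact this (ε/15) (by positivity)
  choose dd hddc hdd using hnear
  have hinj : Function.Injective dd := by
    intro s s' heq
    by_contra hne
    have h1 := hsep s s' hne
    have h2 : dist (aa s) (aa s') < 2 * (ε/15) := by
      calc dist (aa s) (aa s') ≤ dist (aa s) (dd s) + dist (dd s) (aa s') :=
        dist_triangle _ _ _
      _ = dist (aa s) (dd s) + dist (aa s') (dd s) := by rw [dist_comm (dd s) (aa s')]
      _ = dist (aa s) (dd s) + dist (aa s') (dd s') := by rw [heq]
      _ < ε/15 + ε/15 := add_lt_add (hdd s) (hdd s')
      _ = 2 * (ε/15) := by ring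
    rw [dist_eq_norm] at h2
    linarith
  haveI : Countable c := hccount.to_subtype
  have hcount : Countable (Set ℕ) := by
    have hinj2 : Function.Injective (fun s => (⟨dd s, hddc s⟩ : c)) := by
      intro s s' heq
      apply hinj
      simpa using heq
    exact hinj2.countable
  obtain ⟨F, hF⟩ := exists_surjective_nat (Set ℕ)
  exact Function.cantor_surjective F hF

end branchB
section coreAssemble
variable {X : Type*} [NormedAddCommGroup X] [NormedSpace ℝ X] [CompleteSpace X]

lemma core_false (ε C : ℝ) (hε : 0 < ε) (hC : 0 ≤ C) (g : ℕ → X) (p : Finset ℕ → X)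
    (hgl : ∀ n, ε ≤ ‖g n‖) (hpC : ∀ A, ‖p A‖ ≤ C)
    (h3 : ∀ (A : Finset ℕ) (n : ℕ), (∀ a ∈ A, a < n) →
      ‖p (insert n A) - p A - g n‖ ≤ ε * (2⁻¹:ℝ)^n / 256 +
        (if hA : A.Nonempty then ε * (2⁻¹:ℝ)^(A.max' hA) / 256 else ε/256))
    (hX : NoC0 X ∨ ∃ Mset : Set X, RelWeakSeqComplete Mset ∧ ∀ A, p A ∈ Mset) :
    False := by
  classical
  set M : ℝ := 2 * C + ε/50 with hM
  have hM0 : 0 ≤ M := by rw [hM]; positivity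
  have hA : ∀ A : Finset ℕ, ‖∑ j ∈ A, g j‖ ≤ M := by
    intro A
    have h1 := core_claim1 ε hε g p h3 A
    have h2 : (∑ j ∈ A, g j) = (p A - p ∅) - (p A - p ∅ - ∑ j ∈ A, g j) := by abel
    rw [h2]
    calc ‖(p A - p ∅) - (p A - p ∅ - ∑ j ∈ A, g j)‖ ≤
        ‖p A - p ∅‖ + ‖p A - p ∅ - ∑ j ∈ A, g j‖ := norm_sub_le _ _
    _ ≤ (‖p A‖ + ‖p ∅‖) + ε/50 := add_le_add (norm_sub_le _ _) h1
    _ ≤ (C + C) + ε/50 := by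
        have := hpC A; have := hpC (∅ : Finset ℕ); linarith
    _ = M := by rw [hM]; ring
  have hgM : ∀ n, ‖g n‖ ≤ M := by
    intro n
    have := hA {n}
    rwa [Finset.sum_singleton] at this
  obtain ⟨u, ψ, hu, hψ⟩ := selection g (p ∅) ε M hε hgl hgM hA
  rcases hX with hno | ⟨Mset, hrwsc, hmem⟩
  · apply branchA ε M hε hM0 (fun j => g (u j))
      (fun φ A => ?_) ψ (fun k => ⟨(hψ k).1, (hψ k).2.2.1, (hψ k).2.2.2.1, (hψ k).2.2.2.2⟩) hno
    calc ∑ j ∈ A, |φ (g (u j))| = ∑ i ∈ A.image u, |φ (g i)| :=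
        (Finset.sum_image (f := fun i => |φ (g i)|)
          (fun a _ b _ hab => hu.injective hab)).symm
    _ ≤ 2 * (‖φ‖ * M) := wuc_abs_sum g M hA φ _
  · exact branchB ε hε g p h3 (fun φ => wuc_summable g M hA φ) u hu ψ
      (fun k => ⟨(hψ k).1, (hψ k).2.1, (hψ k).2.2.1, (hψ k).2.2.2.1, (hψ k).2.2.2.2⟩)
      Mset hmem hrwsc

end coreAssemble

/-- Pointwise version of the key lemma: if `f : G → X` is bounded continuous and either
`c₀ ⊄ X` or `f(G)` is relatively weakly sequentially complete, then for each `t` and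
`ε > 0` there are `δ > 0` and finitely many `r₁, …, r_m` in a dense set `S` such that any
`τ` which is a `δ`-period at `t` of all differences `Δ_{r_k} f` is an `ε`-period of `f`
at `t`. -/
theorem pointwise_difference_period_lemma {G X : Type*} [AddCommGroup G] [TopologicalSpace G]
    [IsTopologicalAddGroup G] [NormedAddCommGroup X] [NormedSpace ℝ X] [CompleteSpace X]
    (S : Set G) (hS : Dense S) (f : G → X) (hf : Continuous f)
    (hb : Bornology.IsBounded (Set.range f))
    (hX : NoC0 X ∨ RelWeakSeqComplete (Set.range f)) :
    ∀ t : G, ∀ ε > (0 : ℝ), ∃ δ > (0 : ℝ), ∃ m : ℕ, 0 < m ∧ ∃ r : Fin m → G,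
      (∀ k, r k ∈ S) ∧
      ∀ τ : G,
        (∀ k, ‖(f (t + τ + r k) - f (t + τ)) - (f (t + r k) - f t)‖ ≤ δ) →
        ‖f (t + τ) - f t‖ ≤ ε := by
  classical
  intro t ε hε
  by_contra hcon
  push_neg at hcon
  -- reformulate the negation with finsets
  have hbad : ∀ δ : ℝ, 0 < δ → ∀ R : Finset G, ↑R ⊆ S → R.Nonempty → ∃ τ : G,
      (∀ r ∈ R, ‖(f (t + τ + r) - f (t + τ)) - (f (t + r) - f t)‖ ≤ δ) ∧
      ε < ‖f (t + τ) - f t‖ := by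
    intro δ hδ R hRS hRne
    obtain ⟨τ, h1, h2⟩ := hcon δ hδ R.card (Finset.card_pos.mpr hRne)
      (fun k => (R.equivFin.symm k : G))
      (fun k => hRS (Finset.mem_coe.mpr (R.equivFin.symm k).2))
    refine ⟨τ, fun r hr => ?_, h2⟩
    have := h1 (R.equivFin ⟨r, hr⟩)
    rwa [Equiv.symm_apply_apply] at this
  -- density approximation
  have nearS : ∀ (q : G) (d : ℝ), 0 < d → ∃ s, s ∈ S ∧ ‖f (t + s) - f (t + q)‖ ≤ d := by
    intro q d hd
    have hcont : Continuous fun uG : G => f (t + uG) :=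
      hf.comp (continuous_const.add continuous_id)
    have hUopen : IsOpen ((fun uG : G => f (t + uG)) ⁻¹' Metric.ball (f (t + q)) d) :=
      Metric.isOpen_ball.preimage hcont
    have hUne : q ∈ ((fun uG : G => f (t + uG)) ⁻¹' Metric.ball (f (t + q)) d) := by
      simp [Metric.mem_ball, dist_self, hd]
    obtain ⟨s, hsS, hsU⟩ := hS.exists_mem_open hUopen ⟨q, hUne⟩
    refine ⟨s, hsS, ?_⟩
    simp only [Set.mem_preimage, Metric.mem_ball, dist_eq_norm] at hsU
    exact hsU.le
  obtain ⟨s₀, hs₀S, hs₀⟩ := nearS 0 (ε/256) (by positivity)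
  set δf : ℕ → ℝ := fun n => ε * (2⁻¹:ℝ)^n / 256 with hδf
  have hδfpos : ∀ n, 0 < δf n := fun n => by rw [hδf]; positivity
  -- the guarded s-choice function
  set sv : (ℕ → G × (Finset ℕ → G)) → Finset ℕ → G := fun h A =>
    if hA : A.Nonempty then
      (if (h (A.max' hA)).2 A ∈ S then (h (A.max' hA)).2 A else s₀) else s₀ with hsv
  have hsvS : ∀ h A, sv h A ∈ S := by
    intro h A
    simp only [hsv]
    split_ifs with h1 h2
    · exact h2
    · exact hs₀S
    · exact hs₀S
  -- existence of each stage
  have ex : ∀ (h : ℕ → G × (Finset ℕ → G)) (n : ℕ), ∃ y : G × (Finset ℕ → G),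
      (∀ A ∈ (Finset.range n).powerset,
        ‖(f (t + y.1 + sv h A) - f (t + y.1)) - (f (t + sv h A) - f t)‖ ≤ δf n) ∧
      ε < ‖f (t + y.1) - f t‖ ∧
      (∀ A : Finset ℕ, n ∈ A → A ⊆ Finset.range (n+1) →
        (y.2 A ∈ S ∧ ‖f (t + y.2 A) - f (t + (y.1 + sv h (A.erase n)))‖ ≤ δf n)) := by
    intro h n
    set R : Finset G := ((Finset.range n).powerset).image (sv h) with hR
    have hRS : ↑R ⊆ S := by
      intro x hx
      simp only [hR, Finset.coe_image, Set.mem_image] at hx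
      obtain ⟨A, _, rfl⟩ := hx
      exact hsvS h A
    have hRne : R.Nonempty := ⟨sv h ∅,
      Finset.mem_image.mpr ⟨∅, Finset.mem_powerset.mpr (Finset.empty_subset _), rfl⟩⟩
    obtain ⟨τ, hτ1, hτ2⟩ := hbad (δf n) (hδfpos n) R hRS hRne
    have hch : ∀ A : Finset ℕ, ∃ sA : G, n ∈ A → A ⊆ Finset.range (n+1) →
        (sA ∈ S ∧ ‖f (t + sA) - f (t + (τ + sv h (A.erase n)))‖ ≤ δf n) := by
      intro A
      by_cases hc : n ∈ A ∧ A ⊆ Finset.range (n+1)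
      · obtain ⟨sA, h1, h2⟩ := nearS (τ + sv h (A.erase n)) (δf n) (hδfpos n)
        exact ⟨sA, fun _ _ => ⟨h1, h2⟩⟩
      · exact ⟨s₀, fun h1 h2 => absurd ⟨h1, h2⟩ hc⟩
    choose σf hσf using hch
    refine ⟨⟨τ, σf⟩, ?_, hτ2, fun A h1 h2 => hσf A h1 h2⟩
    intro A hA
    exact hτ1 (sv h A) (Finset.mem_image.mpr ⟨A, hA, rfl⟩)
  -- build the chain
  set d0 : G × (Finset ℕ → G) := ⟨0, fun _ => 0⟩ with hd0
  set pick : (ℕ → G × (Finset ℕ → G)) → ℕ → G × (Finset ℕ → G) :=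
    fun h n => Classical.choose (ex h n) with hpick
  have spec : ∀ n, (∀ A ∈ (Finset.range n).powerset,
        ‖(f (t + (bseq d0 pick n).1 + sv (bchain d0 pick n) A) - f (t + (bseq d0 pick n).1)) -
          (f (t + sv (bchain d0 pick n) A) - f t)‖ ≤ δf n) ∧
      ε < ‖f (t + (bseq d0 pick n).1) - f t‖ ∧
      (∀ A : Finset ℕ, n ∈ A → A ⊆ Finset.range (n+1) →
        ((bseq d0 pick n).2 A ∈ S ∧ ‖f (t + (bseq d0 pick n).2 A) -
          f (t + ((bseq d0 pick n).1 + sv (bchain d0 pick n) (A.erase n)))‖ ≤ δf n)) :=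
    fun n => Classical.choose_spec (ex (bchain d0 pick n) n)
  set τn : ℕ → G := fun n => (bseq d0 pick n).1 with hτn
  set sA : Finset ℕ → G := sv (fun i => bseq d0 pick i) with hsA
  have hsv_eq : ∀ (n : ℕ) (A : Finset ℕ), (∀ a ∈ A, a < n) →
      sv (bchain d0 pick n) A = sA A := by
    intro n A hAn
    by_cases hA : A.Nonempty
    · have hmax : A.max' hA < n := hAn _ (A.max'_mem hA)
      simp only [hsA, hsv]
      simp only [dif_pos hA]
      rw [bchain_eq d0 pick hmax]
    · simp only [hsA, hsv]; simp only [dif_neg hA]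
  set g : ℕ → X := fun n => f (t + τn n) - f t with hg
  set p : Finset ℕ → X := fun A =>
    if hA : A.Nonempty then f (t + (τn (A.max' hA) + sA (A.erase (A.max' hA)))) else f t
    with hp
  -- basic properties
  have hgl : ∀ n, ε ≤ ‖g n‖ := fun n => ((spec n).2.1).le
  have hpmem : ∀ A, p A ∈ Set.range f := by
    intro A
    simp only [hp]
    split_ifs
    · exact ⟨_, rfl⟩
    · exact ⟨t, rfl⟩
  obtain ⟨C, hCb⟩ := hb.exists_norm_le
  have hC0 : 0 ≤ C := le_trans (norm_nonneg (f t)) (hCb (f t) ⟨t, rfl⟩)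
  have hpC : ∀ A, ‖p A‖ ≤ C := fun A => hCb _ (hpmem A)
  -- closeness of the S-approximants
  have hsA_close : ∀ (A : Finset ℕ) (hA : A.Nonempty),
      ‖f (t + sA A) - p A‖ ≤ δf (A.max' hA) := by
    intro A hA
    set m := A.max' hA with hm
    have hmem : m ∈ A := A.max'_mem hA
    have hsub : A ⊆ Finset.range (m+1) := by
      intro a ha
      rw [Finset.mem_range]
      exact Nat.lt_succ_of_le (A.le_max' a ha)
    obtain ⟨hS1, hS2⟩ := (spec m).2.2 A hmem hsub
    have herase_lt : ∀ a ∈ A.erase m, a < m := fun a ha =>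
      lt_of_le_of_ne (A.le_max' a (Finset.mem_of_mem_erase ha)) (Finset.ne_of_mem_erase ha)
    rw [hsv_eq m (A.erase m) herase_lt] at hS2
    have hsAA : sA A = (bseq d0 pick m).2 A := by
      simp only [hsA, hsv]
      simp only [dif_pos hA, ← hm, if_pos hS1]
    have hpA : p A = f (t + (τn m + sA (A.erase m))) := by
      simp only [hp]; simp only [dif_pos hA, ← hm]
    rw [hsAA, hpA]
    exact hS2
  -- the key estimate h3
  have h3 : ∀ (A : Finset ℕ) (n : ℕ), (∀ a ∈ A, a < n) →
      ‖p (insert n A) - p A - g n‖ ≤ δf n +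
        (if hA : A.Nonempty then δf (A.max' hA) else ε/256) := by
    intro A n hAn
    have hnnotA : n ∉ A := fun hmem => lt_irrefl n (hAn n hmem)
    set B := insert n A with hB
    have hBne : B.Nonempty := ⟨n, Finset.mem_insert_self n A⟩
    have hmaxB : B.max' hBne = n := by
      apply le_antisymm
      · apply Finset.max'_le
        intro a ha
        rcases Finset.mem_insert.mp ha with rfl | haA
        · exact le_refl a
        · exact (hAn a haA).le
      · exact Finset.le_max' _ _ (Finset.mem_insert_self n A)
    have heraseB : B.erase n = A := Finset.erase_insert hnnotA
    have hpB : p B = f (t + (τn n + sA A)) := by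
      simp only [hp]
      simp only [dif_pos hBne]
      rw [show B.max' hBne = n from hmaxB, heraseB]
    -- term 1
    have ht1 : ‖(f (t + τn n + sA A) - f (t + τn n)) - (f (t + sA A) - f t)‖ ≤ δf n := by
      have := (spec n).1 A (Finset.mem_powerset.mpr (fun a ha => Finset.mem_range.mpr (hAn a ha)))
      rwa [hsv_eq n A hAn] at this
    -- term 2
    have ht2 : ‖f (t + sA A) - p A‖ ≤ (if hA : A.Nonempty then δf (A.max' hA) else ε/256) := by
      by_cases hA : A.Nonempty
      · rw [dif_pos hA]
        exact hsA_close A hA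
      · rw [dif_neg hA]
        have hAempty : A = ∅ := Finset.not_nonempty_iff_eq_empty.mp hA
        have hsAe : sA A = s₀ := by
          simp only [hsA, hsv]; simp only [dif_neg hA]
        have hpe : p A = f t := by simp only [hp]; simp only [dif_neg hA]
        rw [hsAe, hpe]
        have : f t = f (t + 0) := by rw [add_zero]
        rw [this]
        exact hs₀
    have hveq : p B - p A - g n =
        ((f (t + τn n + sA A) - f (t + τn n)) - (f (t + sA A) - f t)) +
        (f (t + sA A) - p A) := by
      rw [hpB, hg]
      simp only
      rw [show t + (τn n + sA A) = t + τn n + sA A from (add_assoc t (τn n) (sA A)).symm]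
      abel
    rw [hveq]
    calc ‖_ + _‖ ≤ _ + _ := norm_add_le _ _
    _ ≤ δf n + (if hA : A.Nonempty then δf (A.max' hA) else ε/256) := add_le_add ht1 ht2
  -- conclude
  have h3' : ∀ (A : Finset ℕ) (n : ℕ), (∀ a ∈ A, a < n) →
      ‖p (insert n A) - p A - g n‖ ≤ ε * (2⁻¹:ℝ)^n / 256 +
        (if hA : A.Nonempty then ε * (2⁻¹:ℝ)^(A.max' hA) / 256 else ε/256) := by
    intro A n hAn
    have := h3 A n hAn
    simpa [hδf] using this
  have hX' : NoC0 X ∨ ∃ Mset : Set X, RelWeakSeqComplete Mset ∧ ∀ A, p A ∈ Mset := by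
    rcases hX with h | h
    · exact Or.inl h
    · exact Or.inr ⟨Set.range f, h, hpmem⟩
  exact core_false ε C hε hC0 g p hgl hpC h3' hX'
end

section
/- Let F : ℝ → ℂ be bounded and uniformly continuous, and suppose there exists h₀ > 0 such that the difference Δ_{h₀} F, given by t ↦ F(t + h₀) − F(t), is recurrent. Then F itself is recurrent. -/
open Filter Topology

/- ### Auxiliary lemmas -/

/-- A finite net of an interval. -/
lemma RecAux.net_lemma (a b δ : ℝ) (hδ : 0 < δ) :
    ∃ N : Finset ℝ, ∀ t ∈ Set.Icc a b, ∃ x ∈ N, |t - x| ≤ δ := by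
  have hcov : Set.Icc a b ⊆ ⋃ x : ℝ, Metric.ball x δ := by
    intro t _; exact Set.mem_iUnion.2 ⟨t, by simpa using hδ⟩
  obtain ⟨N, hN⟩ := isCompact_Icc.elim_finite_subcover (fun x : ℝ => Metric.ball x δ)
    (fun x => Metric.isOpen_ball) hcov
  refine ⟨N, fun t ht => ?_⟩
  obtain ⟨x, hx, htx⟩ := Set.mem_iUnion₂.1 (hN ht)
  exact ⟨x, hx, le_of_lt (by simpa [Real.dist_eq] using htx)⟩

/-- Closure membership in the product topology, via finite sets of coordinates. -/
lemma RecAux.mem_closure_pi {ι : Type*} {S : Set (ι → ℂ)} {f : ι → ℂ} :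
    f ∈ closure S ↔ ∀ (A : Finset ι), ∀ ε > (0:ℝ), ∃ g ∈ S, ∀ i ∈ A, ‖g i - f i‖ ≤ ε := by
  constructor
  · intro hf A ε hε
    have hopen : IsOpen {g : ι → ℂ | ∀ i ∈ A, ‖g i - f i‖ < ε} := by
      have : {g : ι → ℂ | ∀ i ∈ A, ‖g i - f i‖ < ε} =
          ⋂ i ∈ A, {g : ι → ℂ | ‖g i - f i‖ < ε} := by ext g; simp
      rw [this]
      refine isOpen_biInter_finset fun i _ => ?_
      have : Continuous fun g : ι → ℂ => ‖g i - f i‖ :=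
        ((continuous_apply i).sub continuous_const).norm
      exact isOpen_lt this continuous_const
    have hfU : f ∈ {g : ι → ℂ | ∀ i ∈ A, ‖g i - f i‖ < ε} := by
      intro i _; simpa using hε
    obtain ⟨g, hg1, hg2⟩ := _root_.mem_closure_iff.1 hf _ hopen hfU
    exact ⟨g, hg2, fun i hi => (hg1 i hi).le⟩
  · intro H
    rw [_root_.mem_closure_iff]
    intro U hU hfU
    obtain ⟨I, u, hu, hsub⟩ := isOpen_pi_iff.1 hU f hfU
    have : ∀ i ∈ I, ∃ r > (0:ℝ), Metric.ball (f i) r ⊆ u i := by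
      intro i hi
      exact Metric.isOpen_iff.1 (hu i hi).1 _ (hu i hi).2
    choose! r hr hball using this
    by_cases hI : I.Nonempty
    · set ε := I.inf' hI r with hε
      have hεpos : 0 < ε := by
        rw [hε, Finset.lt_inf'_iff hI]; exact fun i hi => hr i hi
      obtain ⟨g, hgS, hg⟩ := H I (ε/2) (by positivity)
      refine ⟨g, hsub ?_, hgS⟩
      intro i hi
      apply hball i hi
      have : ε ≤ r i := Finset.inf'_le _ hi
      have h2 : ‖g i - f i‖ ≤ ε/2 := hg i hi
      rw [Metric.mem_ball, dist_eq_norm]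
      linarith
    · obtain ⟨g, hgS, _⟩ := H I 1 one_pos
      refine ⟨g, hsub ?_, hgS⟩
      intro i hi
      exact absurd (⟨i, hi⟩ : I.Nonempty) hI

noncomputable def RecAux.ee (h₀ : ℝ) (s : ℝ) : ℂ :=
  Complex.exp ((2 * Real.pi * s / h₀ : ℝ) * Complex.I)

namespace RecAux

open Set Complex

lemma ee_add (h₀ : ℝ) (hh₀ : h₀ ≠ 0) (s t : ℝ) : ee h₀ (s + t) = ee h₀ s * ee h₀ t := by
  rw [ee, ee, ee, ← Complex.exp_add]
  congr 1
  push_cast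
  field_simp

lemma ee_norm (h₀ : ℝ) (s : ℝ) : ‖ee h₀ s‖ = 1 := by
  simpa [ee] using Complex.norm_exp_ofReal_mul_I (2 * Real.pi * s / h₀)

lemma ee_int_mul (h₀ : ℝ) (hh₀ : h₀ ≠ 0) (k : ℤ) : ee h₀ (k * h₀) = 1 := by
  have hc : (h₀:ℂ) ≠ 0 := Complex.ofReal_ne_zero.2 hh₀
  have : ((2 * Real.pi * (k * h₀) / h₀ : ℝ) : ℂ) * Complex.I
      = (k : ℂ) * (2 * Real.pi * Complex.I) := by
    push_cast
    field_simp
  rw [ee, this]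
  exact Complex.exp_int_mul_two_pi_mul_I k

lemma ee_eq_one (h₀ : ℝ) (hh₀ : 0 < h₀) (θ : ℝ) (h : ee h₀ θ = 1) : ∃ k : ℤ, θ = k * h₀ := by
  rw [ee, Complex.exp_eq_one_iff] at h
  obtain ⟨n, hn⟩ := h
  refine ⟨n, ?_⟩
  have hc : (h₀:ℂ) ≠ 0 := Complex.ofReal_ne_zero.2 hh₀.ne'
  have hn' : ((2 * Real.pi * θ : ℝ) : ℂ) * Complex.I
      = ((2 * Real.pi * n * h₀ : ℝ) : ℂ) * Complex.I := by
    push_cast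
    push_cast at hn
    field_simp at hn
    linear_combination (2 * (Real.pi:ℂ) * Complex.I) * hn
  have h3 := mul_right_cancel₀ Complex.I_ne_zero hn'
  have h4 : (2 * Real.pi * θ : ℝ) = 2 * Real.pi * n * h₀ := by exact_mod_cast h3
  have h2π : (2 * Real.pi : ℝ) ≠ 0 := by positivity
  exact mul_left_cancel₀ h2π (by linarith : 2 * Real.pi * θ = 2 * Real.pi * ((n:ℝ) * h₀))

lemma exp_near_int (h₀ : ℝ) (hh₀ : 0 < h₀) (η : ℝ) (hη : 0 < η) :
    ∃ δ > (0:ℝ), ∀ τ : ℝ, ‖ee h₀ τ - 1‖ ≤ δ → ∃ k : ℤ, |τ - k * h₀| ≤ η := by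
  set η' := min η (h₀/3) with hη'
  have hη'pos : 0 < η' := lt_min hη (by linarith)
  have hη'le : η' ≤ η := min_le_left _ _
  have hη'le3 : η' ≤ h₀/3 := min_le_right _ _
  have hCne : (Set.Icc η' (h₀ - η')).Nonempty := ⟨η', by constructor <;> linarith⟩
  have hCcomp : IsCompact (Set.Icc η' (h₀ - η')) := isCompact_Icc
  have hcont : ContinuousOn (fun θ => ‖ee h₀ θ - 1‖) (Set.Icc η' (h₀ - η')) := by
    apply Continuous.continuousOn
    have : Continuous (ee h₀) := by
      apply Complex.continuous_exp.comp
      exact (Complex.continuous_ofReal.comp (by continuity)).mul continuous_const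
    exact (this.sub continuous_const).norm
  obtain ⟨θ₀, hθ₀mem, hθ₀min⟩ := hCcomp.exists_isMinOn hCne hcont
  have hδ₀pos : 0 < ‖ee h₀ θ₀ - 1‖ := by
    rcases (norm_nonneg (ee h₀ θ₀ - 1)).lt_or_eq with h | h
    · exact h
    · exfalso
      have h0 : ee h₀ θ₀ - 1 = 0 := by rw [← norm_eq_zero]; exact h.symm
      have h1 : ee h₀ θ₀ = 1 := by rwa [sub_eq_zero] at h0
      obtain ⟨k, hk⟩ := ee_eq_one h₀ hh₀ θ₀ h1
      obtain ⟨hm1, hm2⟩ := hθ₀mem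
      rw [hk] at hm1 hm2
      rcases le_or_gt k 0 with hk0 | hk0
      · have : (k:ℝ) * h₀ ≤ 0 := mul_nonpos_of_nonpos_of_nonneg (by exact_mod_cast hk0) hh₀.le
        linarith
      · have : (1:ℝ) ≤ (k:ℝ) := by exact_mod_cast hk0
        nlinarith
  set δ₀ := ‖ee h₀ θ₀ - 1‖
  refine ⟨δ₀/2, by positivity, fun τ hτ => ?_⟩
  have hfl1 : (⌊τ / h₀⌋ : ℝ) * h₀ ≤ τ := (le_div_iff₀ hh₀).1 (Int.floor_le (τ / h₀))
  have hfl2 : τ < ((⌊τ / h₀⌋ : ℝ) + 1) * h₀ := (div_lt_iff₀ hh₀).1 (Int.lt_floor_add_one (τ / h₀))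
  set ρ : ℝ := τ - (⌊τ / h₀⌋ : ℝ) * h₀ with hρdef
  have hρ0 : 0 ≤ ρ := by simp only [hρdef]; linarith
  have hρh : ρ < h₀ := by simp only [hρdef]; nlinarith
  have heρ : ee h₀ ρ = ee h₀ τ := by
    have hτeq : τ = ρ + (⌊τ / h₀⌋ : ℝ) * h₀ := by simp only [hρdef]; ring
    rw [hτeq, ee_add h₀ hh₀.ne' ρ _, ee_int_mul h₀ hh₀.ne' ⌊τ / h₀⌋, mul_one]
  have hρsmall : ‖ee h₀ ρ - 1‖ ≤ δ₀/2 := by rw [heρ]; exact hτ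
  have hρnot : ρ ∉ Set.Icc η' (h₀ - η') := by
    intro hmem
    have hge : δ₀ ≤ ‖ee h₀ ρ - 1‖ := hθ₀min hmem
    linarith
  rw [Set.mem_Icc, not_and_or, not_le, not_le] at hρnot
  rcases hρnot with h | h
  · refine ⟨⌊τ / h₀⌋, ?_⟩
    rw [show τ - (⌊τ / h₀⌋:ℤ) * h₀ = ρ by rw [hρdef]]
    rw [_root_.abs_of_nonneg hρ0]; linarith
  · refine ⟨⌊τ / h₀⌋ + 1, ?_⟩
    have heq : τ - ((⌊τ / h₀⌋:ℤ) + 1 : ℤ) * h₀ = ρ - h₀ := by push_cast; rw [hρdef]; ring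
    rw [heq, _root_.abs_of_nonpos (by linarith)]
    linarith

lemma exists_minimal_invariant {α : Type*} [TopologicalSpace α]
    (T : ℝ → α → α) (Z : Set α) (hZc : IsCompact Z) (hZcl : IsClosed Z)
    (hZne : Z.Nonempty) (hZinv : ∀ s, T s '' Z ⊆ Z) :
    ∃ M, M ⊆ Z ∧ M.Nonempty ∧ IsClosed M ∧ (∀ s, T s '' M ⊆ M) ∧
      ∀ S, S ⊆ M → S.Nonempty → IsClosed S → (∀ s, T s '' S ⊆ S) → S = M := by
  set 𝒞 : Set (Set α) := {S | S ⊆ Z ∧ S.Nonempty ∧ IsClosed S ∧ ∀ s, T s '' S ⊆ S} with h𝒞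
  have hZmem : Z ∈ 𝒞 := ⟨Set.Subset.rfl, hZne, hZcl, hZinv⟩
  have hchain : ∀ c ⊆ 𝒞, IsChain (· ⊆ ·) c → c.Nonempty →
      ∃ lb ∈ 𝒞, ∀ s ∈ c, lb ⊆ s := by
    intro c hc hchain hcne
    refine ⟨⋂₀ c, ⟨?_, ?_, ?_, ?_⟩, fun s hs => sInter_subset_of_mem hs⟩
    · obtain ⟨s, hs⟩ := hcne
      exact (sInter_subset_of_mem hs).trans (hc hs).1
    · haveI : Nonempty c := hcne.to_subtype
      apply IsCompact.nonempty_sInter_of_directed_nonempty_isCompact_isClosed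
      · exact IsChain.directedOn hchain.symm
      · exact fun U hU => (hc hU).2.1
      · exact fun U hU => hZc.of_isClosed_subset (hc hU).2.2.1 (hc hU).1
      · exact fun U hU => (hc hU).2.2.1
    · exact isClosed_sInter fun U hU => (hc hU).2.2.1
    · intro s
      rintro x ⟨y, hy, rfl⟩
      rw [mem_sInter] at hy ⊢
      intro U hU
      exact (hc hU).2.2.2 s ⟨y, hy U hU, rfl⟩
  obtain ⟨m, hmZ, hmmin⟩ := zorn_superset_nonempty 𝒞 hchain Z hZmem
  have hmmem := hmmin.prop
  refine ⟨m, hmmem.1, hmmem.2.1, hmmem.2.2.1, hmmem.2.2.2, ?_⟩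
  intro S hSm hSne hScl hSinv
  exact le_antisymm hSm (hmmin.le_of_le ⟨hSm.trans hmmem.1, hSne, hScl, hSinv⟩ hSm)

lemma syndetic_return {α : Type*} [TopologicalSpace α]
    (T : ℝ → α → α) (hT : ∀ s, Continuous (T s))
    (hTadd : ∀ s σ x, T s (T σ x) = T (s + σ) x)
    (M : Set α) (hMc : IsCompact M) (hMcl : IsClosed M)
    (hMinv : ∀ s, T s '' M ⊆ M)
    (hmin : ∀ S, S ⊆ M → S.Nonempty → IsClosed S → (∀ s, T s '' S ⊆ S) → S = M)
    (x : α) (hx : x ∈ M) (U : Set α) (hU : IsOpen U) (hxU : x ∈ U) :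
    ∃ L ≥ (0:ℝ), ∀ a : ℝ, ∃ τ ∈ Set.Icc a (a + L), T τ x ∈ U := by
  have hvisit : ∀ y ∈ M, ∃ s : ℝ, T s y ∈ U := by
    intro y hy
    have horb : Set.range (fun s => T s y) ⊆ M := by
      rintro _ ⟨s, rfl⟩
      exact hMinv s ⟨y, hy, rfl⟩
    have hCmem : closure (Set.range (fun s => T s y)) ∈
        ({S | S ⊆ M ∧ S.Nonempty ∧ IsClosed S ∧ ∀ s, T s '' S ⊆ S} : Set (Set α)) := by
      refine ⟨closure_minimal horb hMcl, ⟨T 0 y, subset_closure ⟨0, rfl⟩⟩, isClosed_closure, ?_⟩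
      · intro s
        refine (image_closure_subset_closure_image (hT s)).trans (closure_mono ?_)
        rintro _ ⟨_, ⟨σ, rfl⟩, rfl⟩
        exact ⟨s + σ, (hTadd s σ y).symm⟩
    have hCeq : closure (Set.range (fun s => T s y)) = M :=
      hmin _ hCmem.1 hCmem.2.1 hCmem.2.2.1 hCmem.2.2.2
    have hxC : x ∈ closure (Set.range (fun s => T s y)) := hCeq.symm ▸ hx
    obtain ⟨z, hzU, hzorb⟩ := _root_.mem_closure_iff.1 hxC U hU hxU
    obtain ⟨s, rfl⟩ := hzorb
    exact ⟨s, hzU⟩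
  have hcov : M ⊆ ⋃ s : ℝ, (T s) ⁻¹' U := by
    intro y hy
    obtain ⟨s, hs⟩ := hvisit y hy
    exact Set.mem_iUnion.2 ⟨s, hs⟩
  obtain ⟨J, hJ⟩ := hMc.elim_finite_subcover (fun s : ℝ => (T s) ⁻¹' U)
    (fun s => (hU.preimage (hT s))) hcov
  have hJne : J.Nonempty := by
    by_contra hJe
    rw [Finset.not_nonempty_iff_eq_empty] at hJe
    have := hJ hx
    simp [hJe] at this
  set B := J.sup' hJne (fun s => |s|) with hB
  have hBmem : ∀ s ∈ J, |s| ≤ B := fun s hs => Finset.le_sup' _ hs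
  have hB0 : 0 ≤ B := by
    obtain ⟨s, hs⟩ := hJne
    exact (abs_nonneg s).trans (hBmem s hs)
  refine ⟨2 * B, by linarith, fun a => ?_⟩
  have hy : T (a + B) x ∈ M := hMinv (a + B) ⟨x, hx, rfl⟩
  obtain ⟨s, hsJ, hyV⟩ := Set.mem_iUnion₂.1 (hJ hy)
  refine ⟨s + (a + B), ?_, ?_⟩
  · have h1 : -B ≤ s := (abs_le.1 (hBmem s hsJ)).1
    have h2 : s ≤ B := (abs_le.1 (hBmem s hsJ)).2
    constructor <;> [linarith; linarith]
  · have : T s (T (a + B) x) ∈ U := hyV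
    rwa [hTadd] at this

end RecAux

/-- If `F : ℝ → ℂ` is bounded and uniformly continuous and some difference
`F(· + h₀) − F` with `h₀ > 0` is recurrent, then `F` is recurrent. -/
theorem recurrent_of_one_difference (F : ℝ → ℂ)
    (hb : Bornology.IsBounded (Set.range F)) (hu : UniformContinuous F)
    (h₀ : ℝ) (hh₀ : 0 < h₀) (hΔ : Recurrent (fun t => F (t + h₀) - F t)) :
    Recurrent F := by
  classical
  obtain ⟨Mb, hMb'⟩ := hb.exists_norm_le
  have hMb : ∀ t, ‖F t‖ ≤ Mb := fun t => hMb' _ ⟨t, rfl⟩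
  set G : ℝ → ℂ := fun t => F (t + h₀) - F t with hGdef
  have hGrec : ∀ ε > (0:ℝ), ∀ K : Set ℝ, IsCompact K → RelDense (Eset G ε K) := hΔ.2
  have hGu : UniformContinuous G := by
    have h1 : UniformContinuous fun t : ℝ => t + h₀ :=
      uniformContinuous_id.add uniformContinuous_const
    exact (hu.comp h1).sub hu
  -- moduli of uniform continuity
  have hmodF : ∀ ε : ℝ, 0 < ε → ∃ δ > (0:ℝ), ∀ x y : ℝ, |x - y| ≤ δ → ‖F x - F y‖ ≤ ε := by
    intro ε hε
    obtain ⟨δ, hδ, hδ'⟩ := Metric.uniformContinuous_iff.1 hu ε hε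
    refine ⟨δ/2, by positivity, fun x y hxy => ?_⟩
    have : dist x y < δ := by rw [Real.dist_eq]; linarith
    have := hδ' this
    rw [dist_eq_norm] at this
    linarith
  have hmodG : ∀ ε : ℝ, 0 < ε → ∃ δ > (0:ℝ), ∀ x y : ℝ, |x - y| ≤ δ → ‖G x - G y‖ ≤ ε := by
    intro ε hε
    obtain ⟨δ, hδ, hδ'⟩ := Metric.uniformContinuous_iff.1 hGu ε hε
    refine ⟨δ/2, by positivity, fun x y hxy => ?_⟩
    have : dist x y < δ := by rw [Real.dist_eq]; linarith
    have := hδ' this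
    rw [dist_eq_norm] at this
    linarith
  choose! δF hδFpos hδF using hmodF
  choose! δG hδGpos hδG using hmodG
  -- the flow on `Option ℝ → ℂ`
  set S : ℝ → (Option ℝ → ℂ) → (Option ℝ → ℂ) :=
    fun s w i => i.elim (RecAux.ee h₀ s * w none) (fun t => w (some (t + s))) with hSdef
  have hSnone : ∀ s w, S s w none = RecAux.ee h₀ s * w none := fun s w => rfl
  have hSsome : ∀ s w t, S s w (some t) = w (some (t + s)) := fun s w t => rfl
  have hScont : ∀ s, Continuous (S s) := by
    intro s
    apply continuous_pi
    intro i
    cases i with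
    | none => exact continuous_const.mul (continuous_apply none)
    | some t => exact continuous_apply (some (t + s))
  have hSadd : ∀ s σ w, S s (S σ w) = S (s + σ) w := by
    intro s σ w
    funext i
    cases i with
    | none =>
        show RecAux.ee h₀ s * (RecAux.ee h₀ σ * w none) = RecAux.ee h₀ (s + σ) * w none
        rw [RecAux.ee_add h₀ hh₀.ne' s σ]; ring
    | some t =>
        show w (some (t + s + σ)) = w (some (t + (s + σ)))
        rw [add_assoc]
  -- base point and orbit
  set w₀ : Option ℝ → ℂ := fun i => i.elim 1 F with hw₀def
  set o : ℝ → (Option ℝ → ℂ) := fun s => S s w₀ with hodef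
  have ho_none : ∀ s, o s none = RecAux.ee h₀ s := by
    intro s; show RecAux.ee h₀ s * 1 = _; rw [mul_one]
  have ho_some : ∀ s t, o s (some t) = F (t + s) := fun s t => rfl
  -- the container
  set CZ : Set (Option ℝ → ℂ) := {w | (∀ t : ℝ, ‖w (some t)‖ ≤ Mb) ∧ ‖w none‖ = 1 ∧
    ∀ ε : ℝ, 0 < ε → ∀ x y : ℝ, |x - y| ≤ δF ε → ‖w (some x) - w (some y)‖ ≤ ε} with hCZdef
  have hCZclosed : IsClosed CZ := by
    have e1 : CZ = ({w : Option ℝ → ℂ | ∀ t : ℝ, ‖w (some t)‖ ≤ Mb} ∩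
        {w : Option ℝ → ℂ | ‖w none‖ = 1}) ∩
        {w : Option ℝ → ℂ | ∀ ε : ℝ, 0 < ε → ∀ x y : ℝ, |x - y| ≤ δF ε →
          ‖w (some x) - w (some y)‖ ≤ ε} := by
      ext w; simp only [hCZdef, Set.mem_setOf_eq, Set.mem_inter_iff]; tauto
    rw [e1]
    refine IsClosed.inter (IsClosed.inter ?_ ?_) ?_
    · have : {w : Option ℝ → ℂ | ∀ t : ℝ, ‖w (some t)‖ ≤ Mb} =
          ⋂ t : ℝ, {w : Option ℝ → ℂ | ‖w (some t)‖ ≤ Mb} := by ext w; simp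
      rw [this]
      exact isClosed_iInter fun t =>
        isClosed_le ((continuous_apply (some t)).norm) continuous_const
    · exact isClosed_eq ((continuous_apply none).norm) continuous_const
    · have : {w : Option ℝ → ℂ | ∀ ε : ℝ, 0 < ε → ∀ x y : ℝ, |x - y| ≤ δF ε →
          ‖w (some x) - w (some y)‖ ≤ ε} =
          ⋂ (ε : ℝ) (_ : 0 < ε) (x : ℝ) (y : ℝ) (_ : |x - y| ≤ δF ε),
            {w : Option ℝ → ℂ | ‖w (some x) - w (some y)‖ ≤ ε} := by
        ext w; simp
      rw [this]
      refine isClosed_iInter fun ε => isClosed_iInter fun hε => isClosed_iInter fun x =>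
        isClosed_iInter fun y => isClosed_iInter fun hxy => ?_
      exact isClosed_le (((continuous_apply (some x)).sub (continuous_apply (some y))).norm)
        continuous_const
  have hrangeoCZ : Set.range o ⊆ CZ := by
    rintro _ ⟨s, rfl⟩
    refine ⟨fun t => ?_, ?_, fun ε hε x y hxy => ?_⟩
    · rw [ho_some]; exact hMb _
    · rw [ho_none]; exact RecAux.ee_norm h₀ s
    · rw [ho_some, ho_some]
      exact hδF ε hε _ _ (by rwa [show x + s - (y + s) = x - y by ring])
  set Z₀ : Set (Option ℝ → ℂ) := closure (Set.range o) with hZ₀def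
  have hZ₀CZ : Z₀ ⊆ CZ := closure_minimal hrangeoCZ hCZclosed
  have hZ₀compact : IsCompact Z₀ := by
    have hBall : IsCompact (Set.pi Set.univ
        (fun _ : Option ℝ => Metric.closedBall (0:ℂ) (max Mb 1))) :=
      isCompact_univ_pi (fun _ => isCompact_closedBall _ _)
    apply hBall.of_isClosed_subset isClosed_closure
    intro w hw
    have hw' := hZ₀CZ hw
    intro i _
    cases i with
    | none =>
        simp only [Metric.mem_closedBall, dist_zero_right]
        rw [hw'.2.1]; exact le_max_right _ _
    | some t =>
        simp only [Metric.mem_closedBall, dist_zero_right]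
        exact (hw'.1 t).trans (le_max_left _ _)
  have hZ₀inv : ∀ s, S s '' Z₀ ⊆ Z₀ := by
    intro s
    refine (image_closure_subset_closure_image (hScont s)).trans (closure_mono ?_)
    rintro _ ⟨_, ⟨σ, rfl⟩, rfl⟩
    exact ⟨s + σ, (hSadd s σ w₀).symm⟩
  have hZ₀ne : Z₀.Nonempty := ⟨o 0, subset_closure ⟨0, rfl⟩⟩
  -- the shift flow on `ℝ → ℂ` and the hull of `G`
  set Ts : ℝ → (ℝ → ℂ) → (ℝ → ℂ) := fun s f t => f (t + s) with hTsdef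
  have hTscont : ∀ s, Continuous (Ts s) := by
    intro s
    exact continuous_pi fun t => continuous_apply (t + s)
  have hTsadd : ∀ s σ f, Ts s (Ts σ f) = Ts (s + σ) f := by
    intro s σ f
    funext t
    show f (t + s + σ) = f (t + (s + σ))
    rw [add_assoc]
  set X : Set (ℝ → ℂ) := closure (Set.range fun s => Ts s G) with hXdef
  set CX : Set (ℝ → ℂ) := {f | ∀ ε : ℝ, 0 < ε → ∀ x y : ℝ, |x - y| ≤ δG ε →
    ‖f x - f y‖ ≤ ε} with hCXdef
  have hCXclosed : IsClosed CX := by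
    have : CX = ⋂ (ε : ℝ) (_ : 0 < ε) (x : ℝ) (y : ℝ) (_ : |x - y| ≤ δG ε),
        {f : ℝ → ℂ | ‖f x - f y‖ ≤ ε} := by ext f; simp [hCXdef]
    rw [this]
    refine isClosed_iInter fun ε => isClosed_iInter fun hε => isClosed_iInter fun x =>
      isClosed_iInter fun y => isClosed_iInter fun hxy => ?_
    exact isClosed_le (((continuous_apply x).sub (continuous_apply y)).norm) continuous_const
  have hXCX : X ⊆ CX := by
    apply closure_minimal _ hCXclosed
    rintro _ ⟨s, rfl⟩
    intro ε hε x y hxy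
    show ‖G (x + s) - G (y + s)‖ ≤ ε
    exact hδG ε hε _ _ (by rwa [show x + s - (y + s) = x - y by ring])
  have hXinv : ∀ s, Ts s '' X ⊆ X := by
    intro s
    refine (image_closure_subset_closure_image (hTscont s)).trans (closure_mono ?_)
    rintro _ ⟨_, ⟨σ, rfl⟩, rfl⟩
    exact ⟨s + σ, (hTsadd s σ G).symm⟩
  -- the factor map
  set Phi : (Option ℝ → ℂ) → (ℝ → ℂ) := fun w t => w (some (t + h₀)) - w (some t) with hPhidef
  have hPhicont : Continuous Phi := by
    apply continuous_pi
    intro t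
    exact (continuous_apply (some (t + h₀))).sub (continuous_apply (some t))
  have hPhiequiv : ∀ s w, Phi (S s w) = Ts s (Phi w) := by
    intro s w
    funext t
    show w (some (t + h₀ + s)) - w (some (t + s)) = w (some (t + s + h₀)) - w (some (t + s))
    rw [show t + h₀ + s = t + s + h₀ by ring]
  have hPhio : ∀ σ, Phi (o σ) = Ts σ G := by
    intro σ
    funext t
    show F (t + h₀ + σ) - F (t + σ) = F (t + σ + h₀) - F (t + σ)
    rw [show t + h₀ + σ = t + σ + h₀ by ring]
  have hPhiZX : Phi '' Z₀ ⊆ X := by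
    refine (image_closure_subset_closure_image hPhicont).trans ?_
    refine closure_minimal ?_ isClosed_closure
    rintro _ ⟨_, ⟨σ, rfl⟩, rfl⟩
    exact subset_closure ⟨σ, (hPhio σ).symm⟩
  -- every element of `X` almost-returns to `G` (minimality of the hull of `G`)
  have hL3 : ∀ v ∈ X, ∀ (A : Finset ℝ), ∀ ε > (0:ℝ), ∃ s : ℝ, ∀ t ∈ A,
      ‖v (t + s) - G t‖ ≤ ε := by
    intro v hv A ε hε
    have hε4 : (0:ℝ) < ε/4 := by positivity
    obtain ⟨L₀, hL₀0, hL₀⟩ := hGrec (ε/4) hε4 ↑A (A.finite_toSet.isCompact)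
    obtain ⟨J, hJ⟩ := RecAux.net_lemma 0 L₀ (δG (ε/4)) (hδGpos _ hε4)
    set A' : Finset ℝ := Finset.image₂ (· + ·) A J with hA'def
    obtain ⟨g, hgS, hg⟩ := (RecAux.mem_closure_pi.1 hv) A' (ε/4) hε4
    obtain ⟨σ, rfl⟩ := hgS
    obtain ⟨τ, hτE, hτI⟩ := hL₀ σ
    set s := τ - σ with hsdef
    have hsI : s ∈ Set.Icc (0:ℝ) L₀ := by
      obtain ⟨h1, h2⟩ := hτI
      constructor <;> [simp only [hsdef]; simp only [hsdef]] <;> linarith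
    obtain ⟨sj, hsjJ, hsj⟩ := hJ s hsI
    refine ⟨s, fun t ht => ?_⟩
    have hterm1 : ‖v (t + s) - v (t + sj)‖ ≤ ε/4 := by
      apply hXCX hv (ε/4) hε4
      rw [show t + s - (t + sj) = s - sj by ring]
      exact hsj
    have hterm2 : ‖v (t + sj) - G (t + sj + σ)‖ ≤ ε/4 := by
      have hmem : t + sj ∈ A' := Finset.mem_image₂.2 ⟨t, ht, sj, hsjJ, rfl⟩
      have := hg _ hmem
      rw [norm_sub_rev] at this
      exact this
    have hterm3 : ‖G (t + sj + σ) - G (t + s + σ)‖ ≤ ε/4 := by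
      apply hδG (ε/4) hε4
      rw [show t + sj + σ - (t + s + σ) = sj - s by ring, abs_sub_comm]
      exact hsj
    have hterm4 : ‖G (t + s + σ) - G t‖ ≤ ε/4 := by
      have : t + s + σ = t + τ := by simp only [hsdef]; ring
      rw [this]
      exact hτE t ht
    calc ‖v (t + s) - G t‖
        = ‖(v (t + s) - v (t + sj)) + ((v (t + sj) - G (t + sj + σ))
            + ((G (t + sj + σ) - G (t + s + σ)) + (G (t + s + σ) - G t)))‖ := by ring_nf
      _ ≤ ε := by
          calc ‖(v (t + s) - v (t + sj)) + ((v (t + sj) - G (t + sj + σ))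
              + ((G (t + sj + σ) - G (t + s + σ)) + (G (t + s + σ) - G t)))‖
              ≤ ‖v (t + s) - v (t + sj)‖ + (‖v (t + sj) - G (t + sj + σ)‖
                + (‖G (t + sj + σ) - G (t + s + σ)‖ + ‖G (t + s + σ) - G t‖)) := by
                refine (norm_add_le _ _).trans ?_
                gcongr
                refine (norm_add_le _ _).trans ?_
                gcongr
                exact norm_add_le _ _
            _ ≤ ε := by linarith
  -- a minimal subset of the hull of `(F, 1)`
  obtain ⟨M', hM'Z, hM'ne, hM'cl, hM'inv, hM'min⟩ :=
    RecAux.exists_minimal_invariant S Z₀ hZ₀compact isClosed_closure hZ₀ne hZ₀inv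
  have hM'c : IsCompact M' := hZ₀compact.of_isClosed_subset hM'cl hM'Z
  -- `Phi '' M'` is a nonempty closed invariant subset of `X`, hence contains `G`
  have hPhiM'X : Phi '' M' ⊆ X := (Set.image_mono hM'Z).trans hPhiZX
  have hPhiM'closed : IsClosed (Phi '' M') := (hM'c.image hPhicont).isClosed
  have hPhiM'inv : ∀ s, Ts s '' (Phi '' M') ⊆ Phi '' M' := by
    intro s
    rintro _ ⟨_, ⟨w, hw, rfl⟩, rfl⟩
    exact ⟨S s w, hM'inv s ⟨w, hw, rfl⟩, (hPhiequiv s w)⟩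
  have hGPhiM' : G ∈ Phi '' M' := by
    obtain ⟨w₁, hw₁⟩ := hM'ne
    have hv : Phi w₁ ∈ X := hPhiM'X ⟨w₁, hw₁, rfl⟩
    have hGcl : G ∈ closure (Set.range fun s => Ts s (Phi w₁)) := by
      rw [RecAux.mem_closure_pi]
      intro A ε hε
      obtain ⟨s, hs⟩ := hL3 (Phi w₁) hv A ε hε
      exact ⟨Ts s (Phi w₁), ⟨s, rfl⟩, fun t ht => hs t ht⟩
    have hsub : closure (Set.range fun s => Ts s (Phi w₁)) ⊆ Phi '' M' := by
      apply closure_minimal _ hPhiM'closed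
      rintro _ ⟨s, rfl⟩
      exact hPhiM'inv s ⟨Phi w₁, ⟨w₁, hw₁, rfl⟩, rfl⟩
    exact hsub hGcl
  obtain ⟨wstar, hwstarM', hwstarPhi⟩ := hGPhiM'
  -- the function `u`, unit `χ`, and the `h₀`-periodic part `p`
  set u : ℝ → ℂ := fun t => wstar (some t) with hudef
  have hwstarCZ : wstar ∈ CZ := hZ₀CZ (hM'Z hwstarM')
  have huMod : ∀ ε : ℝ, 0 < ε → ∀ x y : ℝ, |x - y| ≤ δF ε → ‖u x - u y‖ ≤ ε :=
    hwstarCZ.2.2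
  have hχ : ‖wstar none‖ = 1 := hwstarCZ.2.1
  set p : ℝ → ℂ := fun t => u t - F t with hpdef
  have hpper : ∀ t, p (t + h₀) = p t := by
    intro t
    have h1 : u (t + h₀) - u t = F (t + h₀) - F t := congrFun hwstarPhi t
    simp only [hpdef]
    linear_combination h1
  have hpperk : ∀ k : ℤ, ∀ t, p (t + k * h₀) = p t := by
    intro k
    induction k using Int.induction_on with
    | zero => intro t; simp
    | succ n ih =>
        intro t
        have : t + ((n:ℤ) + 1 : ℤ) * h₀ = (t + (n:ℤ) * h₀) + h₀ := by push_cast; ring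
        rw [this, hpper, ih]
    | pred n ih =>
        intro t
        have : t + (-(n:ℤ) - 1 : ℤ) * h₀ + h₀ = t + (-(n:ℤ) : ℤ) * h₀ := by push_cast; ring
        have h2 := hpper (t + (-(n:ℤ) - 1 : ℤ) * h₀)
        rw [this] at h2
        rw [← h2, ih]
  have hpMod : ∀ ε : ℝ, 0 < ε → ∀ x y : ℝ, |x - y| ≤ δF (ε/2) → ‖p x - p y‖ ≤ ε := by
    intro ε hε x y hxy
    have h2 : (0:ℝ) < ε/2 := by positivity
    have h1 := huMod (ε/2) h2 x y hxy
    have h2' := hδF (ε/2) h2 x y hxy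
    calc ‖p x - p y‖ = ‖(u x - u y) - (F x - F y)‖ := by
          simp only [hpdef]; congr 1; ring
      _ ≤ ‖u x - u y‖ + ‖F x - F y‖ := norm_sub_le _ _
      _ ≤ ε := by linarith
  -- conclusion
  refine ⟨hu.continuous, ?_⟩
  intro ε hε K hK
  obtain ⟨R, hRK⟩ := hK.isBounded.subset_closedBall 0
  have hRK' : K ⊆ Set.Icc (-R) R := by
    intro t ht
    have := hRK ht
    rw [Metric.mem_closedBall, Real.dist_eq, sub_zero] at this
    exact abs_le.1 this
  have hε8 : (0:ℝ) < ε/8 := by positivity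
  obtain ⟨N, hN⟩ := RecAux.net_lemma (-R) R (δF (ε/8)) (hδFpos _ hε8)
  obtain ⟨δ₂, hδ₂pos, hδ₂⟩ := RecAux.exp_near_int h₀ hh₀ (δF (ε/8)) (hδFpos _ hε8)
  set U : Set (Option ℝ → ℂ) := {w | (∀ t ∈ N, ‖w (some t) - wstar (some t)‖ < ε/4) ∧
    ‖w none - wstar none‖ < δ₂} with hUdef
  have hUopen : IsOpen U := by
    have e1 : U = (⋂ t ∈ N, {w : Option ℝ → ℂ | ‖w (some t) - wstar (some t)‖ < ε/4}) ∩
        {w : Option ℝ → ℂ | ‖w none - wstar none‖ < δ₂} := by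
      ext w
      simp only [hUdef, Set.mem_setOf_eq, Set.mem_inter_iff, Set.mem_iInter]
    rw [e1]
    refine IsOpen.inter (isOpen_biInter_finset fun t _ => ?_) ?_
    · exact isOpen_lt (((continuous_apply (some t)).sub continuous_const).norm) continuous_const
    · exact isOpen_lt (((continuous_apply none).sub continuous_const).norm) continuous_const
  have hwstarU : wstar ∈ U := by
    constructor
    · intro t _
      simp only [sub_self, norm_zero]
      positivity
    · simpa using hδ₂pos
  obtain ⟨L, hL0, hLret⟩ := RecAux.syndetic_return S hScont hSadd M' hM'c hM'cl hM'inv hM'min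
    wstar hwstarM' U hUopen hwstarU
  refine ⟨L, hL0, fun a => ?_⟩
  obtain ⟨τ, hτI, hτU⟩ := hLret a
  refine ⟨τ, ?_, hτI⟩
  -- extract the two pieces of information from `S τ wstar ∈ U`
  obtain ⟨hτ1, hτ2⟩ := hτU
  have hτ1' : ∀ t ∈ N, ‖u (t + τ) - u t‖ < ε/4 := by
    intro t ht
    have := hτ1 t ht
    rwa [hSsome] at this
  have hτee : ‖RecAux.ee h₀ τ - 1‖ ≤ δ₂ := by
    have := hτ2
    rw [hSnone] at this
    have heq : RecAux.ee h₀ τ * wstar none - wstar none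
        = (RecAux.ee h₀ τ - 1) * wstar none := by ring
    rw [heq, norm_mul, hχ, mul_one] at this
    exact this.le
  obtain ⟨k, hk⟩ := hδ₂ τ hτee
  -- the period bound
  intro t ht
  have htR : t ∈ Set.Icc (-R) R := hRK' ht
  obtain ⟨x, hxN, hxt⟩ := hN t htR
  have hub : ‖u (t + τ) - u t‖ ≤ ε/2 := by
    have h1 : ‖u (t + τ) - u (x + τ)‖ ≤ ε/8 := by
      apply huMod (ε/8) hε8
      rw [show t + τ - (x + τ) = t - x by ring]
      exact hxt
    have h2 : ‖u (x + τ) - u x‖ ≤ ε/4 := (hτ1' x hxN).le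
    have h3 : ‖u x - u t‖ ≤ ε/8 := by
      apply huMod (ε/8) hε8
      rw [abs_sub_comm]
      exact hxt
    calc ‖u (t + τ) - u t‖
        = ‖(u (t + τ) - u (x + τ)) + ((u (x + τ) - u x) + (u x - u t))‖ := by ring_nf
      _ ≤ ‖u (t + τ) - u (x + τ)‖ + (‖u (x + τ) - u x‖ + ‖u x - u t‖) :=
          (norm_add_le _ _).trans (by gcongr; exact norm_add_le _ _)
      _ ≤ ε/2 := by linarith
  have hpb : ‖p (t + τ) - p t‖ ≤ ε/4 := by
    have hshift : p (t + τ) = p (t + (τ - k * h₀)) := by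
      have := hpperk k (t + (τ - k * h₀))
      rw [show t + (τ - k * h₀) + k * h₀ = t + τ by ring] at this
      exact this
    rw [hshift]
    apply hpMod (ε/4) (by positivity)
    rw [show t + (τ - k * h₀) - t = τ - k * h₀ by ring]
    have heq8 : δF (ε/4/2) = δF (ε/8) := by rw [show (ε/4/2:ℝ) = ε/8 by ring]
    rw [heq8]
    exact hk
  have hfinal : ‖F (t + τ) - F t‖ ≤ ε := by
    have hFu : ∀ s, F s = u s - p s := by
      intro s; simp only [hpdef]; ring
    calc ‖F (t + τ) - F t‖
        = ‖(u (t + τ) - u t) - (p (t + τ) - p t)‖ := by rw [hFu, hFu]; congr 1; ring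
      _ ≤ ‖u (t + τ) - u t‖ + ‖p (t + τ) - p t‖ := norm_sub_le _ _
      _ ≤ ε := by linarith
  exact hfinal
end
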